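/- arXiv:0803.2176 — 13 statements merged into one kernel-verified Lean document; each statement's English description precedes it below -/
import Mathlib

section
/- Let R be a commutative ring. Then the following are equivalent: (1) R is a strongly clean ring; (2) R is a 1-SR ring; (3) R is a 1-SRC ring. -/
/-- An element of a ring is *strongly clean* if it is the sum of an idempotent
and a unit that commute with each other. -/
def IsStronglyClean {S : Type*} [Ring S] (a : S) : Prop :=
  ∃ e u : S, IsIdempotentElem e ∧ IsUnit u ∧ a = e + u ∧ e * u = u * e
/-- `f₀, f₁` form the data of an SR factorization: both are monic and there are
distinct idempotents `e₀ ≠ e₁` with `f₀(e₀)` and `f₁(e₁)` units. -/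
def IsSRPair {R : Type*} [CommRing R] (f₀ f₁ : Polynomial R) : Prop :=
  f₀.Monic ∧ f₁.Monic ∧
    ∃ e₀ e₁ : R, IsIdempotentElem e₀ ∧ IsIdempotentElem e₁ ∧ e₀ ≠ e₁ ∧
      IsUnit (Polynomial.eval e₀ f₀) ∧ IsUnit (Polynomial.eval e₁ f₁)

/-- `f` has an SR factorization `f = f₀ * f₁`. -/
def HasSRFactorization {R : Type*} [CommRing R] (f : Polynomial R) : Prop :=
  ∃ f₀ f₁ : Polynomial R, f = f₀ * f₁ ∧ IsSRPair f₀ f₁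

/-- `f` has an SRC factorization: an SR factorization `f = f₀ * f₁` in which the
pair `(f₀, f₁)` is moreover unimodular, i.e. `f₀ R[t] + f₁ R[t] = R[t]`. -/
def HasSRCFactorization {R : Type*} [CommRing R] (f : Polynomial R) : Prop :=
  ∃ f₀ f₁ : Polynomial R, f = f₀ * f₁ ∧ IsSRPair f₀ f₁ ∧ IsCoprime f₀ f₁

/-- `R` is an `n`-SR ring if every monic polynomial of degree `n` over `R`
has an SR factorization. -/
def IsSRRing (R : Type*) [CommRing R] (n : ℕ) : Prop :=
  ∀ f : Polynomial R, f.Monic → f.natDegree = n → HasSRFactorization f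

/-- `R` is an `n`-SRC ring if every monic polynomial of degree `n` over `R`
has an SRC factorization. -/
def IsSRCRing (R : Type*) [CommRing R] (n : ℕ) : Prop :=
  ∀ f : Polynomial R, f.Monic → f.natDegree = n → HasSRCFactorization f

open Polynomial

/-- A commutative ring `R` is strongly clean iff it is a `1`-SR ring iff it is a
`1`-SRC ring. -/
theorem stronglyClean_iff_one_SR_iff_one_SRC (R : Type*) [CommRing R] :
    ((∀ a : R, IsStronglyClean a) ↔ IsSRRing R 1) ∧
    ((∀ a : R, IsStronglyClean a) ↔ IsSRCRing R 1) := by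
  have key1 : (∀ a : R, IsStronglyClean a) → IsSRCRing R 1 := by
    intro h f hm hd
    have hnt : Nontrivial R := by
      by_contra hc
      have hs : Subsingleton R := not_nontrivial_iff_subsingleton.mp hc
      have : f = 0 := Subsingleton.elim f 0
      simp [this] at hd
    obtain ⟨e, u, he, hu, hae, -⟩ := h (-(f.coeff 0))
    refine ⟨1, f, (one_mul f).symm,
      ⟨monic_one, hm, 1 - e, e, he.one_sub, he, ?_, by simp, ?_⟩,
      isCoprime_one_left⟩
    · intro hc
      have h0 : e * (1 - e) = 0 := by rw [mul_sub, mul_one, he, sub_self]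
      rw [hc, he] at h0
      rw [h0, sub_zero] at hc
      exact one_ne_zero hc
    · rw [hm.eq_X_add_C hd]
      have : e + f.coeff 0 = -u := by
        have : f.coeff 0 = -e - u := by linear_combination -hae
        rw [this]; ring
      simp only [eval_add, eval_X, eval_C, this]
      exact hu.neg
  have key2 : IsSRRing R 1 → ∀ a : R, IsStronglyClean a := by
    intro h a
    by_cases hnt : Nontrivial R
    · obtain ⟨f₀, f₁, hf, hm0, hm1, e₀, e₁, he0, he1, hne, hu0, hu1⟩ :=
        h (X + C (-a)) (monic_X_add_C _) (natDegree_X_add_C _)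
      have hdeg : f₀.natDegree + f₁.natDegree = 1 := by
        rw [← Polynomial.Monic.natDegree_mul hm0 hm1, ← hf, natDegree_X_add_C]
      rcases Nat.add_eq_one_iff.mp hdeg with ⟨h0, h1⟩ | ⟨h0, h1⟩
      · have hf0 : f₀ = 1 := hm0.natDegree_eq_zero.mp h0
        have hf1 : f₁ = X + C (-a) := by rw [hf, hf0, one_mul]
        rw [hf1] at hu1
        simp only [eval_add, eval_X, eval_C] at hu1
        refine ⟨e₁, a - e₁, he1, ?_, by ring, mul_comm _ _⟩
        rw [show a - e₁ = -(e₁ + -a) by ring]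
        exact hu1.neg
      · have hf1 : f₁ = 1 := hm1.natDegree_eq_zero.mp h1
        have hf0 : f₀ = X + C (-a) := by rw [hf, hf1, mul_one]
        rw [hf0] at hu0
        simp only [eval_add, eval_X, eval_C] at hu0
        refine ⟨e₀, a - e₀, he0, ?_, by ring, mul_comm _ _⟩
        rw [show a - e₀ = -(e₀ + -a) by ring]
        exact hu0.neg
    · have hs : Subsingleton R := not_nontrivial_iff_subsingleton.mp hnt
      exact ⟨0, 1, IsIdempotentElem.zero, isUnit_one, Subsingleton.elim _ _,
        Subsingleton.elim _ _⟩
  have key3 : IsSRCRing R 1 → IsSRRing R 1 := by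
    intro h f hm hd
    obtain ⟨f₀, f₁, hf, hp, -⟩ := h f hm hd
    exact ⟨f₀, f₁, hf, hp⟩
  exact ⟨⟨fun h => key3 (key1 h), key2⟩, ⟨key1, fun h => key2 (key3 h)⟩⟩
end

section
/- Let R be a commutative ring, let n be a positive integer, and let A ∈ Mₙ(R). Let f ∈ R[t] be a monic polynomial with f(A) = 0. If f(e) is a unit of R for some idempotent e ∈ R, then A is a strongly clean element of the matrix ring Mₙ(R). -/
/-- If `A` is an `n × n` matrix over a commutative ring `R`, `f` is a monic polynomial
with `f(A) = 0`, and `f(e)` is a unit of `R` for some idempotent `e ∈ R`, then `A` is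
strongly clean in `Mₙ(R)`. -/
theorem isStronglyClean_of_aeval_eq_zero {R : Type*} [CommRing R] {n : ℕ} (hn : 0 < n)
    (A : Matrix (Fin n) (Fin n) R) (f : Polynomial R) (hf : f.Monic)
    (hfA : Polynomial.aeval A f = 0) (e : R) (he : IsIdempotentElem e)
    (hu : IsUnit (Polynomial.eval e f)) :
    IsStronglyClean A := by
  classical
  let φ := algebraMap R (Matrix (Fin n) (Fin n) R)
  obtain ⟨g, hg⟩ := Polynomial.X_sub_C_dvd_sub_C_eval (a := e) (p := f)
  have h1 : -φ (Polynomial.eval e f) = (A - φ e) * Polynomial.aeval A g := by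
    have h := congrArg (Polynomial.aeval A) hg
    simp only [map_sub, Polynomial.aeval_C, Polynomial.aeval_X, map_mul, hfA, zero_sub] at h
    exact h
  have h2 : -φ (Polynomial.eval e f) = Polynomial.aeval A g * (A - φ e) := by
    rw [mul_comm (Polynomial.X - Polynomial.C e) g] at hg
    have h := congrArg (Polynomial.aeval A) hg
    simp only [map_sub, Polynomial.aeval_C, Polynomial.aeval_X, map_mul, hfA, zero_sub] at h
    exact h
  obtain ⟨v, hv⟩ := (hu.map φ).neg
  have hcomm : ∀ x : Matrix (Fin n) (Fin n) R, Commute ((v⁻¹ : (Matrix (Fin n) (Fin n) R)ˣ) : Matrix (Fin n) (Fin n) R) x := by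
    intro x
    refine Commute.units_inv_left ?_
    show Commute (↑v) x
    rw [hv]
    exact Commute.neg_left (Algebra.commutes _ x : Commute _ x)
  have hB1 : (A - φ e) * (((v⁻¹ : (Matrix (Fin n) (Fin n) R)ˣ) : Matrix (Fin n) (Fin n) R) * Polynomial.aeval A g) = 1 := by
    rw [(hcomm (Polynomial.aeval A g)).eq, ← mul_assoc, ← h1, ← hv, Units.mul_inv]
  have hB2 : (((v⁻¹ : (Matrix (Fin n) (Fin n) R)ˣ) : Matrix (Fin n) (Fin n) R) * Polynomial.aeval A g) * (A - φ e) = 1 := by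
    rw [mul_assoc, ← h2, ← hv, Units.inv_mul]
  refine ⟨φ e, A - φ e, ?_, ⟨⟨A - φ e, _, hB1, hB2⟩, rfl⟩, by abel, ?_⟩
  · show φ e * φ e = φ e
    rw [← map_mul]; exact congrArg φ he
  · exact (Algebra.commutes e (A - φ e))
end

section
/- Let R be a commutative ring, let n be a positive integer, and let A ∈ Mₙ(R). If the characteristic polynomial χ_A(t) = det(tI − A) of A has an SRC factorization, then A is a strongly clean element of Mₙ(R). -/
open Polynomial in
/-- If the characteristic polynomial of a square matrix `A` over a commutative ring has an
SRC factorization, then `A` is strongly clean. -/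
theorem isStronglyClean_of_charpoly_hasSRCFactorization {R : Type*} [CommRing R] {n : ℕ}
    (hn : 0 < n) (A : Matrix (Fin n) (Fin n) R)
    (h : HasSRCFactorization (Matrix.charpoly A)) :
    IsStronglyClean A := by
  obtain ⟨f₀, f₁, hf, ⟨-, -, e₀, e₁, hi₀, hi₁, -, hu₀, hu₁⟩, hcop⟩ := h
  obtain ⟨u, v, hc⟩ := hcop
  obtain ⟨g₀, hg₀⟩ := Polynomial.X_sub_C_dvd_sub_C_eval (a := e₀) (p := f₀)
  obtain ⟨g₁, hg₁⟩ := Polynomial.X_sub_C_dvd_sub_C_eval (a := e₁) (p := f₁)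
  obtain ⟨r₀, hr₀⟩ := isUnit_iff_exists_inv.mp hu₀
  obtain ⟨r₁, hr₁⟩ := isUnit_iff_exists_inv.mp hu₁
  set s₀ : R := Polynomial.eval e₀ f₀ with hs₀
  set s₁ : R := Polynomial.eval e₁ f₁ with hs₁
  -- rearranged hypotheses in R[X]
  have H0 : f₀ = C s₀ + (X - C e₀) * g₀ := by rw [← hg₀]; ring
  have H1 : f₁ = C s₁ + (X - C e₁) * g₁ := by rw [← hg₁]; ring
  have HR0 : C s₀ * C r₀ = 1 := by rw [← C_mul, hr₀, C_1]
  have HR1 : C s₁ * C r₁ = 1 := by rw [← C_mul, hr₁, C_1]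
  have HI0 : C e₀ * C e₀ = C e₀ := by rw [← C_mul, hi₀]
  have HI1 : C e₁ * C e₁ = C e₁ := by rw [← C_mul, hi₁]
  set pP : Polynomial R := C e₀ * (v * f₁) + C e₁ * (u * f₀) with hpP
  set q : Polynomial R := -(C r₀ * g₀ * (v * f₁)) - C r₁ * g₁ * (u * f₀) with hq
  have ID1 : pP * pP = pP + (f₀ * f₁) * (u * v * (2 * (C e₀ * C e₁) - C e₀ - C e₁)) := by
    rw [hpP]
    linear_combination (v*f₁)^2*HI0 + (u*f₀)^2*HI1 + (C e₀*(v*f₁) + C e₁*(u*f₀))*hc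
  have ID2 : (X - pP) * q = 1 + (f₀ * f₁) *
      (-(u*v*(C e₀*(C r₀*g₀) + C e₁*(C r₁*g₁))) + u*v*(C e₀*(C r₁*g₁) + C e₁*(C r₀*g₀))
        - C r₀*v - C r₁*u) := by
    rw [hpP, hq]
    linear_combination (C e₀*(C r₀*g₀)*(v*f₁) + C e₁*(C r₁*g₁)*(u*f₀) + 1)*hc
      + (C r₀*(v*f₁))*H0 + (C r₁*(u*f₀))*H1 + (v*f₁)*HR0 + (u*f₀)*HR1
  -- now push through aeval
  have hchi : Polynomial.aeval A (f₀ * f₁) = 0 := by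
    rw [← hf]; exact Matrix.aeval_self_charpoly A
  set φ : Polynomial R →ₐ[R] Matrix (Fin n) (Fin n) R := Polynomial.aeval A with hφ
  have hA : φ X = A := Polynomial.aeval_X A
  refine ⟨φ pP, φ (X - pP), ?_, ?_, ?_, ?_⟩
  · show φ pP * φ pP = φ pP
    rw [← map_mul, ID1, map_add, map_mul, hchi, zero_mul, add_zero]
  · have hUV : φ (X - pP) * φ q = 1 := by
      rw [← map_mul, ID2, map_add, map_mul, hchi, zero_mul, add_zero, map_one]
    have hVU : φ q * φ (X - pP) = 1 := by
      rw [← map_mul, mul_comm, map_mul, hUV]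
    exact ⟨⟨φ (X - pP), φ q, hUV, hVU⟩, rfl⟩
  · rw [map_sub, hA]; abel
  · rw [← map_mul, ← map_mul, mul_comm]
end

section
/- If R is a commutative n-SRC ring (n a positive integer), then the matrix ring Mₙ(R) is strongly clean. -/
open Polynomial in
/-- If `R` is a commutative `n`-SRC ring, then `Mₙ(R)` is strongly clean. -/
theorem matrix_stronglyClean_of_isSRCRing {R : Type*} [CommRing R] {n : ℕ} (hn : 0 < n)
    (h : IsSRCRing R n) :
    ∀ A : Matrix (Fin n) (Fin n) R, IsStronglyClean A := by
  intro A
  by_cases hR : Nontrivial R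
  case neg =>
    have : Subsingleton R := not_nontrivial_iff_subsingleton.mp hR
    exact ⟨0, 0, IsIdempotentElem.zero, isUnit_of_subsingleton 0,
      Subsingleton.elim _ _, Subsingleton.elim _ _⟩
  set f : R[X] := A.charpoly with hfdef
  have hfm : f.Monic := A.charpoly_monic
  have hfd : f.natDegree = n := by
    rw [hfdef, Matrix.charpoly_natDegree_eq_dim]; exact Fintype.card_fin n
  obtain ⟨f₀, f₁, hf, ⟨hm₀, hm₁, e₀, e₁, hi₀, hi₁, hne, hu₀, hu₁⟩, hcop⟩ := h f hfm hfd
  obtain ⟨a, b, hab⟩ := hcop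
  obtain ⟨u₀, hu₀'⟩ := hu₀
  obtain ⟨u₁, hu₁'⟩ := hu₁
  set v₀ : R := ((u₀⁻¹ : Rˣ) : R) with hv₀def
  set v₁ : R := ((u₁⁻¹ : Rˣ) : R) with hv₁def
  have hv₀ : C v₀ * C ((u₀ : R)) = 1 := by
    rw [← C_mul]; norm_cast; rw [Units.inv_mul]; exact C_1
  have hv₁ : C v₁ * C ((u₁ : R)) = 1 := by
    rw [← C_mul]; norm_cast; rw [Units.inv_mul]; exact C_1
  have hiC₀ : C e₀ * C e₀ = C e₀ := by rw [← C_mul, hi₀]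
  have hiC₁ : C e₁ * C e₁ = C e₁ := by rw [← C_mul, hi₁]
  set q₀ : R[X] := f₀ /ₘ (X - C e₀) with hq₀def
  set q₁ : R[X] := f₁ /ₘ (X - C e₁) with hq₁def
  have hf₀ : C ((u₀ : R)) + (X - C e₀) * q₀ = f₀ := by
    have := modByMonic_add_div f₀ (X - C e₀)
    rwa [modByMonic_X_sub_C_eq_C_eval, ← hu₀'] at this
  have hf₁ : C ((u₁ : R)) + (X - C e₁) * q₁ = f₁ := by
    have := modByMonic_add_div f₁ (X - C e₁)
    rwa [modByMonic_X_sub_C_eq_C_eval, ← hu₁'] at this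
  -- The polynomial data
  set E₀ : R[X] := a * f₀ with hE₀def
  set E₁ : R[X] := b * f₁ with hE₁def
  set Fp : R[X] := C e₀ * E₁ + C e₁ * E₀ with hFpdef
  set Up : R[X] := X - Fp with hUpdef
  set Vp : R[X] := -(C v₀ * q₀ * E₁) - (C v₁ * q₁ * E₀) with hVpdef
  -- key polynomial identities
  have keyI : Fp * Fp = Fp +
      (-(C e₀ + C e₁ - 2 * (C e₀ * C e₁)) * (a * b)) * f := by
    simp only [hFpdef, hE₀def, hE₁def]
    linear_combination (a * b * C e₀ + a * b * C e₁ - 2 * (a * b * (C e₀ * C e₁))) * hf +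
      (f₀ * a * (C e₁ * C e₁) + f₁ * b * C e₀ - f₁ * b * (C e₁ * C e₁) + f₁ * b * C e₁ +
        C e₁ * C e₁ - C e₁) * hab +
      (f₁ ^ 2 * b ^ 2) * hiC₀ + (f₁ ^ 2 * b ^ 2 - 2 * (f₁ * b) + 1) * hiC₁
  have keyII : Up * Vp = 1 +
      (-(2 * (a * b)) - C v₀ * b ^ 2 * f₁ - C v₁ * a ^ 2 * f₀ -
        a * b * (X - C e₀) * C v₁ * q₁ - a * b * (X - C e₁) * C v₀ * q₀) * f := by
    simp only [hUpdef, hVpdef, hFpdef, hE₀def, hE₁def]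
    linear_combination
      (X * a * b * q₀ * C v₀ + X * a * b * q₁ * C v₁ + f₀ * a ^ 2 * C v₁ +
        f₁ * b ^ 2 * C v₀ - a * b * q₀ * C v₀ * C e₁ - a * b * q₁ * C v₁ * C e₀ +
        2 * (a * b)) * hf +
      (f₀ * f₁ * a * b * C v₀ - f₁ * b * C v₀) * hf₀ +
      (f₀ * f₁ * a * b * C v₁ - f₀ * a * C v₁) * hf₁ +
      (f₀ * f₁ * a * C v₁ + f₀ * f₁ * b * C v₀ + f₀ * a * q₁ * C v₁ * C e₁ +
        f₁ * b * q₀ * C v₀ * C e₀ - f₁ * b * C ((u₀ : R)) * C v₀ -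
        f₁ * b * C ((u₁ : R)) * C v₁ + 2 * (f₁ * b) + C ((u₁ : R)) * C v₁) * hab +
      (f₁ ^ 2 * b ^ 2) * hv₀ + (f₁ ^ 2 * b ^ 2 - 2 * (f₁ * b) + 1) * hv₁
  -- push through aeval at A
  have hCH : (aeval A) f = 0 := Matrix.aeval_self_charpoly A
  set E := (aeval A) Fp with hEdef
  set U := (aeval A) Up with hUdef
  set V := (aeval A) Vp with hVdef
  refine ⟨E, U, ?_, ?_, ?_, ?_⟩
  · show E * E = E
    rw [hEdef, ← map_mul, keyI, map_add, map_mul, hCH, mul_zero, add_zero]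
  · have hUV : U * V = 1 := by
      rw [hUdef, hVdef, ← map_mul, keyII, map_add, map_mul, hCH, mul_zero, add_zero, map_one]
    have hVU : V * U = 1 := by
      rw [hVdef, hUdef, ← map_mul, mul_comm Vp Up, keyII, map_add, map_mul, hCH, mul_zero,
        add_zero, map_one]
    exact ⟨⟨U, V, hUV, hVU⟩, rfl⟩
  · have : Fp + Up = X := by rw [hUpdef]; ring
    calc A = (aeval A) (X : R[X]) := (aeval_X A).symm
    _ = (aeval A) (Fp + Up) := by rw [this]
    _ = E + U := by rw [map_add]
  · rw [hEdef, hUdef, ← map_mul, ← map_mul, mul_comm]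
end

section
/- Let R be a projective-free ring. Then the following are equivalent: (1) R is a strongly clean ring; (2) R is a clean ring; (3) R is a local ring; (4) R is an exchange ring, i.e. for every r ∈ R there exists an idempotent e ∈ R with e ∈ Rr and 1 − e ∈ R(1 − r). -/
universe u

/-- A ring `R` is *projective-free* if every finitely generated projective
`R`-module is free of unique rank. -/
def ProjectiveFree (R : Type u) [Ring R] : Prop :=
  ∀ (M : Type u) [AddCommGroup M] [Module R M],
    Module.Finite R M → Module.Projective R M →
      ∃! r : ℕ, Nonempty (Module.Basis (Fin r) R M)

/-- An element of a ring is *clean* if it is the sum of an idempotent and a unit. -/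
def IsCleanElem {S : Type*} [Ring S] (a : S) : Prop :=
  ∃ e u : S, IsIdempotentElem e ∧ IsUnit u ∧ a = e + u

lemma pf_idem {R : Type u} [Ring R] (hR : ProjectiveFree R) {e : R}
    (he : IsIdempotentElem e) : e = 0 ∨ e = 1 := by
  have he' : IsIdempotentElem (1 - e) := he.one_sub
  have hee' : e * (1 - e) = 0 := by
    rw [mul_sub, mul_one, he.eq, sub_self]
  have he'e : (1 - e) * e = 0 := by
    rw [sub_mul, one_mul, he.eq, sub_self]
  set f : R →ₗ[R] R := LinearMap.toSpanSingleton R R e with hf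
  set g : R →ₗ[R] R := LinearMap.toSpanSingleton R R (1 - e) with hg
  have hfx : ∀ x : R, f x = x * e := fun x => rfl
  have hgx : ∀ x : R, g x = x * (1 - e) := fun x => rfl
  have hsplitf : (f.codRestrict (LinearMap.range f) (fun c => LinearMap.mem_range_self f c)).comp
      (LinearMap.range f).subtype = LinearMap.id := by
    ext ⟨y, x, rfl⟩
    simp only [LinearMap.comp_apply, LinearMap.codRestrict_apply, Submodule.subtype_apply,
      LinearMap.id_apply, hfx]
    rw [mul_assoc, he]
  have hsplitg : (g.codRestrict (LinearMap.range g) (fun c => LinearMap.mem_range_self g c)).comp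
      (LinearMap.range g).subtype = LinearMap.id := by
    ext ⟨y, x, rfl⟩
    simp only [LinearMap.comp_apply, LinearMap.codRestrict_apply, Submodule.subtype_apply,
      LinearMap.id_apply, hgx]
    rw [mul_assoc, he']
  have hprojf : Module.Projective R (LinearMap.range f) :=
    Module.Projective.of_split (LinearMap.range f).subtype _ hsplitf
  have hprojg : Module.Projective R (LinearMap.range g) :=
    Module.Projective.of_split (LinearMap.range g).subtype _ hsplitg
  have hfinf : Module.Finite R (LinearMap.range f) := Module.Finite.range f
  have hfing : Module.Finite R (LinearMap.range g) := Module.Finite.range g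
  obtain ⟨r, ⟨br⟩, -⟩ := hR (LinearMap.range f) hfinf hprojf
  obtain ⟨s, ⟨bs⟩, -⟩ := hR (LinearMap.range g) hfing hprojg
  let φ : R →ₗ[R] (LinearMap.range f) × (LinearMap.range g) :=
    (f.codRestrict (LinearMap.range f) (fun c => LinearMap.mem_range_self f c)).prod
    (g.codRestrict (LinearMap.range g) (fun c => LinearMap.mem_range_self g c))
  let ψ : (LinearMap.range f) × (LinearMap.range g) →ₗ[R] R :=
    (LinearMap.range f).subtype.coprod (LinearMap.range g).subtype
  have hψφ : ψ.comp φ = LinearMap.id := by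
    apply LinearMap.ext; intro x
    simp only [LinearMap.comp_apply, LinearMap.id_apply, φ, ψ, LinearMap.prod_apply,
      Function.prod, LinearMap.coprod_apply, LinearMap.codRestrict_apply, Submodule.subtype_apply,
      hfx, hgx]
    rw [mul_sub, mul_one, add_sub_cancel]
  have hφψ : φ.comp ψ = LinearMap.id := by
    apply LinearMap.ext; rintro ⟨⟨y, x, rfl⟩, ⟨z, w, rfl⟩⟩
    simp only [LinearMap.comp_apply, LinearMap.id_apply, φ, ψ, LinearMap.prod_apply,
      Function.prod, LinearMap.coprod_apply, LinearMap.codRestrict_apply, Submodule.subtype_apply]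
    refine Prod.ext (Subtype.ext ?_) (Subtype.ext ?_) <;>
      simp only [LinearMap.codRestrict_apply, hfx, hgx, add_mul, mul_assoc, he.eq, he'.eq,
        hee', he'e, mul_zero, add_zero, zero_add]
  let eqv : R ≃ₗ[R] (LinearMap.range f) × (LinearMap.range g) :=
    LinearEquiv.ofLinear φ ψ hφψ hψφ
  let bR : Module.Basis (Fin (r + s)) R R :=
    ((br.prod bs).map eqv.symm).reindex finSumFinEquiv
  obtain ⟨n, -, hun⟩ := hR R inferInstance inferInstance
  have h1 : (1 : ℕ) = n := hun 1 ⟨Module.Basis.singleton (Fin 1) R⟩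
  have hrs : r + s = n := hun (r + s) ⟨bR⟩
  have hrs1 : r + s = 1 := by omega
  rcases Nat.eq_zero_or_pos r with hr | hr
  · subst hr
    left
    have hsub : Subsingleton (LinearMap.range f) := br.repr.toEquiv.subsingleton
    have : (⟨e, ⟨1, by rw [hfx, one_mul]⟩⟩ : LinearMap.range f) = ⟨0, Submodule.zero_mem _⟩ :=
      Subsingleton.elim _ _
    exact congrArg Subtype.val this
  · have hs : s = 0 := by omega
    subst hs
    right
    have hsub : Subsingleton (LinearMap.range g) := bs.repr.toEquiv.subsingleton
    have : (⟨1 - e, ⟨1, by rw [hgx, one_mul]⟩⟩ : LinearMap.range g) = ⟨0, Submodule.zero_mem _⟩ :=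
      Subsingleton.elim _ _
    have h0 : 1 - e = 0 := congrArg Subtype.val this
    exact (sub_eq_zero.mp h0).symm

lemma pf_nontrivial {R : Type u} [Ring R] (hR : ProjectiveFree R) : Nontrivial R := by
  by_contra h
  rw [not_nontrivial_iff_subsingleton] at h
  obtain ⟨n, -, hun⟩ := hR R inferInstance inferInstance
  have h0 : (0 : ℕ) = n := hun 0 ⟨Module.Basis.empty _⟩
  have h1 : (1 : ℕ) = n := hun 1 ⟨Module.Basis.singleton (Fin 1) R⟩
  omega

lemma localRing_of_unit_or_unit {R : Type u} [Ring R] [Nontrivial R]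
    (h : ∀ a : R, IsUnit a ∨ IsUnit (1 - a)) : IsLocalRing R :=
  ⟨fun {a b} hab => (eq_sub_of_add_eq' hab) ▸ h a⟩

lemma unit_or_unit_of_localRing {R : Type u} [Ring R] [IsLocalRing R] (a : R) :
    IsUnit a ∨ IsUnit (1 - a) :=
  IsLocalRing.isUnit_or_isUnit_of_add_one (a := a) (b := 1 - a) (by abel)

/-- For a projective-free ring `R`, the following are equivalent: `R` is strongly clean;
`R` is clean; `R` is local; `R` is an exchange ring (for every `r` there is an idempotent
`e ∈ Rr` with `1 - e ∈ R(1 - r)`). -/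
theorem projectiveFree_stronglyClean_iff_clean_iff_local_iff_exchange
    (R : Type u) [Ring R] (hR : ProjectiveFree R) :
    ((∀ a : R, IsStronglyClean a) ↔ (∀ a : R, IsCleanElem a)) ∧
    ((∀ a : R, IsCleanElem a) ↔ IsLocalRing R) ∧
    (IsLocalRing R ↔
      ∀ r : R, ∃ e : R, IsIdempotentElem e ∧ (∃ s : R, e = s * r) ∧
        ∃ t : R, 1 - e = t * (1 - r)) := by
  have hnt : Nontrivial R := pf_nontrivial hR
  -- clean → local
  have hCL : (∀ a : R, IsCleanElem a) → IsLocalRing R := by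
    intro h
    apply localRing_of_unit_or_unit
    intro a
    obtain ⟨e, u, he, hu, hau⟩ := h a
    rcases pf_idem hR he with rfl | rfl
    · left; rw [hau, zero_add]; exact hu
    · right
      have h2 : 1 - a = -u := by rw [hau]; abel
      rw [h2]; exact hu.neg
  -- local → strongly clean
  have hLS : IsLocalRing R → ∀ a : R, IsStronglyClean a := by
    intro h a
    rcases unit_or_unit_of_localRing a with hu | hu
    · exact ⟨0, a, IsIdempotentElem.zero, hu, by abel, by noncomm_ring⟩
    · refine ⟨1, a - 1, IsIdempotentElem.one, ?_, by abel, by noncomm_ring⟩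
      have : a - 1 = -(1 - a) := by abel
      rw [this]; exact hu.neg
  -- local → exchange
  have hLE : IsLocalRing R → ∀ r : R, ∃ e : R, IsIdempotentElem e ∧ (∃ s : R, e = s * r) ∧
      ∃ t : R, 1 - e = t * (1 - r) := by
    intro h r
    rcases unit_or_unit_of_localRing r with hu | hu
    · obtain ⟨v, hv⟩ := hu
      exact ⟨1, IsIdempotentElem.one, ⟨(↑v⁻¹ : R), by rw [← hv]; exact (v.inv_mul).symm⟩,
        0, by rw [sub_self, zero_mul]⟩
    · obtain ⟨v, hv⟩ := hu
      exact ⟨0, IsIdempotentElem.zero, ⟨0, (zero_mul r).symm⟩,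
        (↑v⁻¹ : R), by rw [sub_zero, ← hv]; exact (v.inv_mul).symm⟩
  -- exchange → local
  have hEL : (∀ r : R, ∃ e : R, IsIdempotentElem e ∧ (∃ s : R, e = s * r) ∧
      ∃ t : R, 1 - e = t * (1 - r)) → IsLocalRing R := by
    intro h
    apply localRing_of_unit_or_unit
    intro r
    obtain ⟨e, he, ⟨s, hs⟩, ⟨t, ht⟩⟩ := h r
    have key : ∀ a b : R, b * a = 1 → IsUnit a := by
      intro a b hba
      have hab : IsIdempotentElem (a * b) := by
        unfold IsIdempotentElem
        rw [mul_assoc, ← mul_assoc b, hba, one_mul]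
      rcases pf_idem hR hab with h0 | h1
      · exfalso
        have : a = 0 := by
          calc a = a * (b * a) := by rw [hba, mul_one]
          _ = (a * b) * a := by rw [mul_assoc]
          _ = 0 := by rw [h0, zero_mul]
        rw [this, mul_zero] at hba
        exact zero_ne_one hba
      · exact ⟨⟨a, b, h1, hba⟩, rfl⟩
    rcases pf_idem hR he with rfl | rfl
    · right
      rw [sub_zero] at ht
      exact key _ t ht.symm
    · left
      exact key _ s hs.symm
  refine ⟨⟨fun h a => ?_, fun h => hLS (hCL h)⟩, ⟨hCL, fun h a => ?_⟩, ⟨hLE, hEL⟩⟩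
  · obtain ⟨e, u, he, hu, hau, -⟩ := h a
    exact ⟨e, u, he, hu, hau⟩
  · obtain ⟨e, u, he, hu, hau, -⟩ := hLS h a
    exact ⟨e, u, he, hu, hau⟩
end

section
/- Let R be a Boolean ring (i.e. every element of R is idempotent). Then for every positive integer n, the matrix ring Mₙ(R) is strongly clean. -/
/-- Key computational lemma: in a commutative ring, if `a ^ (m+1) = a ^ (m+2) * x`,
then `a` is the sum of an idempotent and a unit. -/
lemma key_comm' {T : Type*} [CommRing T] (a x : T) (m : ℕ)
    (h : a ^ (m + 1) = a ^ (m + 2) * x) :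
    ∃ e u v : T, e * e = e ∧ u * v = 1 ∧ v * u = 1 ∧ a = e + u := by
  have hred : ∀ j : ℕ, a ^ (m + 1 + j) * x ^ j = a ^ (m + 1) := by
    intro j
    induction j with
    | zero => simp
    | succ j ih =>
      calc a ^ (m + 1 + (j + 1)) * x ^ (j + 1)
          = (a ^ (m + 2) * x) * (a ^ j * x ^ j) := by ring
        _ = a ^ (m + 1) * (a ^ j * x ^ j) := by rw [← h]
        _ = a ^ (m + 1 + j) * x ^ j := by ring
        _ = a ^ (m + 1) := ih
  have h1 : a ^ (m + 2) * x = a ^ (m + 1) := by simpa using hred 1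
  have h2 : a ^ (2 * m + 2) * x ^ (m + 1) = a ^ (m + 1) := by
    calc a ^ (2 * m + 2) * x ^ (m + 1) = a ^ (m + 1 + (m + 1)) * x ^ (m + 1) := by ring_nf
      _ = a ^ (m + 1) := hred (m + 1)
  set s : T := ∑ i ∈ Finset.range (m + 1), a ^ i with hs
  have h3 : s * (a - 1) = a ^ (m + 1) - 1 := geom_sum_mul a (m + 1)
  set e : T := a ^ (m + 1) * x ^ (m + 1) with he_def
  have huv : (a - (1 - e)) * (a ^ (m + 1) * x ^ (m + 2) - (1 - e) * s) = 1 := by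
    linear_combination x ^ (m + 1) * h1 + (a ^ (m + 1) * x ^ (m + 1) - 1) * h3 +
      (1 + x ^ (m + 2) + s * x ^ (m + 1)) * h2
  refine ⟨1 - e, a - (1 - e), a ^ (m + 1) * x ^ (m + 2) - (1 - e) * s, ?_, huv, ?_, by ring⟩
  · linear_combination (x ^ (m + 1)) * h2
  · linear_combination huv

/-- A finitely generated subring of a commutative Boolean ring is finite. -/
lemma finite_closure_boolean' {R : Type*} [CommRing R] (hB : ∀ a : R, a * a = a)
    (s : Set R) (hs : s.Finite) : Finite (Subring.closure s) := by
  have h2 : ∀ a : R, a + a = 0 := by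
    intro a
    have h4 := hB (a + a)
    have h1 := hB a
    linear_combination h4 - 4 * h1
  set T := Algebra.adjoin ℤ s with hT
  haveI : Algebra.FiniteType ℤ ↥T :=
    (Subalgebra.fg_iff_finiteType _).1 (Subalgebra.fg_def.2 ⟨s, hs, rfl⟩)
  haveI : Algebra.IsIntegral ℤ ↥T := by
    constructor
    intro y
    refine ⟨Polynomial.X ^ 2 - Polynomial.X, ?_, ?_⟩
    · apply Polynomial.monic_X_pow_sub
      simpa using Polynomial.degree_X_le
    · have hy : y * y = y := Subtype.ext (hB (y : R))
      simp [sq, hy]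
  haveI : Module.Finite ℤ ↥T := Algebra.IsIntegral.finite
  have hfin : Finite ↥T := Module.finite_of_fg_torsion ↥T (fun y =>
    ⟨⟨2, by simp [mem_nonZeroDivisors_iff_ne_zero]⟩, by
      show (2 : ℤ) • y = 0
      rw [two_smul]
      exact Subtype.ext (h2 (y : R))⟩)
  exact Finite.of_equiv _ (Subring.closureEquivAdjoinInt s).symm.toEquiv

/-- If `R` is a Boolean ring, then the matrix ring `Mₙ(R)` is strongly clean for every
positive integer `n`. -/
theorem matrix_stronglyClean_of_boolean {R : Type*} [Ring R] (hB : ∀ a : R, a * a = a)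
    (n : ℕ) (hn : 0 < n) :
    ∀ A : Matrix (Fin n) (Fin n) R, IsStronglyClean A := by
  intro A
  -- characteristic 2
  have h2 : ∀ a : R, a + a = 0 := by
    intro a
    have h4 := hB (a + a)
    rw [mul_add, add_mul, hB a] at h4
    exact add_left_cancel (show a + a + (a + a) = (a + a) + 0 by rw [add_zero]; exact h4)
  -- commutativity
  have hcomm : ∀ a b : R, a * b = b * a := by
    intro a b
    have h4 := hB (a + b)
    rw [mul_add, add_mul, add_mul, hB a, hB b] at h4
    have key : a * b + b * a = 0 := by
      have h5 : (a + b) + (a * b + b * a) = a + b := by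
        calc (a + b) + (a * b + b * a) = a + b * a + (a * b + b) := by abel
          _ = a + b := h4
      exact add_eq_left.mp h5
    calc a * b = a * b + (b * a + b * a) := by rw [h2 (b * a), add_zero]
      _ = (a * b + b * a) + b * a := by abel
      _ = b * a := by rw [key, zero_add]
  letI : CommRing R := { ‹Ring R› with mul_comm := hcomm }
  -- the subring generated by the entries of A is finite
  set S : Subring R := Subring.closure (Set.range fun p : Fin n × Fin n => A p.1 p.2) with hSdef
  haveI hSfin : Finite ↥S :=
    finite_closure_boolean' hB _ (Set.finite_range _)
  -- A comes from a matrix over S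
  set A' : Matrix (Fin n) (Fin n) ↥S :=
    fun i j => ⟨A i j, Subring.subset_closure ⟨(i, j), rfl⟩⟩ with hA'def
  have hmapA : S.subtype.mapMatrix A' = A := by ext i j; rfl
  have hmap : ∀ k : ℕ, (S.subtype.mapMatrix (A' ^ k) : Matrix (Fin n) (Fin n) R) = A ^ k := by
    intro k; rw [map_pow, hmapA]
  haveI : Finite (Matrix (Fin n) (Fin n) ↥S) := by unfold Matrix; infer_instance
  -- powers of A eventually repeat
  obtain ⟨i, j, hij, hpow⟩ : ∃ i j : ℕ, i < j ∧ A' ^ i = A' ^ j := by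
    obtain ⟨i, j, hne, heq⟩ := Finite.exists_ne_map_eq_of_infinite (fun k : ℕ => A' ^ k)
    rcases hne.lt_or_gt with h | h
    · exact ⟨i, j, h, heq⟩
    · exact ⟨j, i, h, heq.symm⟩
  have hApow : A ^ (i + 1) = A ^ (j + 1) := by
    have : A ^ i = A ^ j := by rw [← hmap i, ← hmap j, hpow]
    rw [pow_succ, pow_succ, this]
  -- now work in the commutative subring generated by A
  clear hpow hmap hmapA hSfin
  set C : Subring (Matrix (Fin n) (Fin n) R) := Subring.closure {A} with hCdef
  letI : CommRing ↥C := Subring.closureCommRingOfComm (by rintro x rfl y rfl; rfl)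
  set a : ↥C := ⟨A, Subring.subset_closure rfl⟩ with hadef
  set x : ↥C := a ^ (j - i - 1) with hxdef
  have hxy : a ^ (i + 1) = a ^ (i + 2) * x := by
    apply Subtype.ext
    push_cast [hxdef]
    rw [← pow_add]
    have hexp : i + 2 + (j - i - 1) = j + 1 := by omega
    rw [hexp]
    exact hApow
  obtain ⟨e, u, v, he, huv, hvu, hau⟩ := key_comm' a x i hxy
  have hcoe_he := congrArg Subtype.val he
  have hcoe_huv := congrArg Subtype.val huv
  have hcoe_hvu := congrArg Subtype.val hvu
  have hcoe_hau := congrArg Subtype.val hau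
  have hcoe_comm := congrArg Subtype.val (mul_comm e u)
  push_cast at hcoe_he hcoe_huv hcoe_hvu hcoe_hau hcoe_comm
  exact ⟨(e : Matrix (Fin n) (Fin n) R), (u : Matrix (Fin n) (Fin n) R),
    hcoe_he, ⟨⟨u, v, hcoe_huv, hcoe_hvu⟩, rfl⟩, hcoe_hau, hcoe_comm⟩
end

section
/- Let R be a Boolean ring with more than 2 elements. Then for every n ≥ 2, R is not an n-SR ring. -/
open Polynomial in
private lemma bool_unit_eq_one {R : Type*} [CommRing R] (hB : ∀ a : R, a * a = a)
    {v : R} (hv : IsUnit v) : v = 1 := by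
  obtain ⟨u, rfl⟩ := hv
  have h1 : (u : R) * ((u : R) * (↑u⁻¹ : R)) = 1 * ((u : R) * (↑u⁻¹ : R)) := by
    rw [← mul_assoc, hB, one_mul]
  rw [u.mul_inv] at h1
  simpa using h1

private lemma bool_pow {R : Type*} [CommRing R] (hB : ∀ a : R, a * a = a)
    (e : R) (k : ℕ) : e ^ (k + 1) = e := by
  induction k with
  | zero => simp
  | succ k ih => rw [pow_succ, ih, hB]

/-- A Boolean ring with more than two elements is not an `n`-SR ring for any `n ≥ 2`. -/
theorem boolean_not_isSRRing {R : Type*} [CommRing R] (hB : ∀ a : R, a * a = a)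
    (hcard : ∃ x y z : R, x ≠ y ∧ x ≠ z ∧ y ≠ z) {n : ℕ} (hn : 2 ≤ n) :
    ¬ IsSRRing R n := by
  classical
  intro hSR
  obtain ⟨m, rfl⟩ : ∃ m, n = m + 2 := ⟨n - 2, by omega⟩
  obtain ⟨x, y, z, hxy, hxz, hyz⟩ := hcard
  haveI : Nontrivial R := nontrivial_of_ne x y hxy
  have two0 : (1 + 1 : R) = 0 := by
    have h := hB (1 + 1)
    linear_combination h
  obtain ⟨a, ha0, ha1⟩ : ∃ a : R, a ≠ 0 ∧ a ≠ 1 := by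
    by_contra h
    push_neg at h
    by_cases h1 : x = 0 <;> by_cases h2 : y = 0 <;> by_cases h3 : z = 0 <;>
      first
      | exact hxy (h1.trans h2.symm)
      | exact hxz (h1.trans h3.symm)
      | exact hyz (h2.trans h3.symm)
      | exact hxy ((h x h1).trans (h y h2).symm)
      | exact hxz ((h x h1).trans (h z h3).symm)
      | exact hyz ((h y h2).trans (h z h3).symm)
  set f : Polynomial R := Polynomial.X ^ (m + 2) + Polynomial.X ^ (m + 1) + Polynomial.C a
    with hfdef
  have hmono : f.Monic := by
    unfold f
    monicity!
  have hdeg : f.natDegree = m + 2 := by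
    unfold f
    compute_degree!
  obtain ⟨f₀, f₁, hf, h₀, h₁, e₀, e₁, -, -, hne, hu₀, hu₁⟩ := hSR f hmono hdeg
  have hv₀ : f₀.eval e₀ = 1 := bool_unit_eq_one hB hu₀
  have hv₁ : f₁.eval e₁ = 1 := bool_unit_eq_one hB hu₁
  have hevalf : ∀ e : R, f.eval e = a := by
    intro e
    simp only [hfdef, Polynomial.eval_add, Polynomial.eval_pow, Polynomial.eval_X,
      Polynomial.eval_C, bool_pow hB e]
    linear_combination e * two0
  have hdsum : f₀.natDegree + f₁.natDegree = m + 2 := by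
    rw [← hdeg, hf, h₀.natDegree_mul h₁]
  have hna : ¬ IsUnit a := fun h => ha1 (bool_unit_eq_one hB h)
  have hspan : Ideal.span {a} ≠ (⊤ : Ideal R) :=
    fun h => hna (Ideal.span_singleton_eq_top.mp h)
  obtain ⟨mI, hmax, hle⟩ := Ideal.exists_le_maximal _ hspan
  have hamem : a ∈ mI := hle (Ideal.subset_span rfl)
  haveI := hmax
  letI : Field (R ⧸ mI) := Ideal.Quotient.field mI
  set π : R →+* R ⧸ mI := Ideal.Quotient.mk mI with hπ
  set F₀ := f₀.map π with hF₀def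
  set F₁ := f₁.map π with hF₁def
  have hπa : π a = 0 := Ideal.Quotient.eq_zero_iff_mem.mpr hamem
  have hprod : F₀ * F₁ = Polynomial.X ^ (m + 1) * (Polynomial.X + 1) := by
    rw [hF₀def, hF₁def, ← Polynomial.map_mul, ← hf, hfdef]
    simp only [Polynomial.map_add, Polynomial.map_pow, Polynomial.map_X, Polynomial.map_C, hπa,
      map_zero]
    ring
  have hidem : ∀ e : R, π e = 0 ∨ π e = 1 := by
    intro e
    have h2 : π e * π e = π e := by rw [← map_mul, hB]
    have h3 : π e * (π e - 1) = 0 := by linear_combination h2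
    rcases mul_eq_zero.mp h3 with h | h
    · exact Or.inl h
    · exact Or.inr (by linear_combination h)
  have hFe₀ : F₀.eval (π e₀) = 1 := by
    rw [hF₀def, Polynomial.eval_map, Polynomial.eval₂_at_apply, hv₀, map_one]
  have hFe₁ : F₁.eval (π e₁) = 1 := by
    rw [hF₁def, Polynomial.eval_map, Polynomial.eval₂_at_apply, hv₁, map_one]
  have hK2 : (1 + 1 : R ⧸ mI) = 0 := by
    have : ((1 : R ⧸ mI) + 1) = π (1 + 1) := by simp
    rw [this, two0, map_zero]
  have hzero : ∀ c : R ⧸ mI, c = 0 ∨ c = 1 → (F₀ * F₁).eval c = 0 := by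
    intro c hc
    rw [hprod]
    rcases hc with rfl | rfl
    · simp
    · simp only [Polynomial.eval_mul, Polynomial.eval_add, Polynomial.eval_pow,
        Polynomial.eval_X, Polynomial.eval_one, one_pow, one_mul, hK2]
  have h10 : F₁.eval (π e₀) = 0 := by
    have h := hzero (π e₀) (hidem e₀)
    rwa [Polynomial.eval_mul, hFe₀, one_mul] at h
  have h01 : F₀.eval (π e₁) = 0 := by
    have h := hzero (π e₁) (hidem e₁)
    rwa [Polynomial.eval_mul, hFe₁, mul_one] at h
  have hE : π e₀ ≠ π e₁ := by
    intro h
    rw [h, h01] at hFe₀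
    exact zero_ne_one hFe₀
  have hd₀ : F₀.natDegree = f₀.natDegree := h₀.natDegree_map π
  have hd₁ : F₁.natDegree = f₁.natDegree := h₁.natDegree_map π
  have hF₀ne : F₀ ≠ 0 := (h₀.map π).ne_zero
  have hF₁ne : F₁ ≠ 0 := (h₁.map π).ne_zero
  have key : f₀.natDegree = 1 ∨ f₁.natDegree = 1 := by
    rcases hidem e₀ with he₀ | he₀ <;> rcases hidem e₁ with he₁ | he₁
    · exact absurd (he₀.trans he₁.symm) hE
    · -- π e₀ = 0, π e₁ = 1 : show f₀.natDegree = 1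
      left
      have hF00 : F₀.eval 0 = 1 := he₀ ▸ hFe₀
      have hndvd : ¬ (Polynomial.X : Polynomial (R ⧸ mI)) ∣ F₀ := by
        rw [Polynomial.X_dvd_iff, Polynomial.coeff_zero_eq_eval_zero, hF00]
        exact one_ne_zero
      have hpowdvd : (Polynomial.X : Polynomial (R ⧸ mI)) ^ (m + 1) ∣ F₀ * F₁ := by
        rw [hprod]; exact dvd_mul_right _ _
      have hpow : (Polynomial.X : Polynomial (R ⧸ mI)) ^ (m + 1) ∣ F₁ :=
        Polynomial.prime_X.pow_dvd_of_dvd_mul_left _ hndvd hpowdvd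
      have hdvd1 : (Polynomial.X - Polynomial.C 1 : Polynomial (R ⧸ mI)) ∣ F₀ :=
        Polynomial.dvd_iff_isRoot.mpr (by rw [Polynomial.IsRoot, ← he₁]; exact h01)
      have h1le : 1 ≤ F₀.natDegree := by
        have h := Polynomial.natDegree_le_of_dvd hdvd1 hF₀ne
        rwa [Polynomial.natDegree_X_sub_C] at h
      have hm1 : m + 1 ≤ F₁.natDegree := by
        have h := Polynomial.natDegree_le_of_dvd hpow hF₁ne
        simpa using h
      omega
    · -- π e₀ = 1, π e₁ = 0 : show f₁.natDegree = 1
      right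
      have hF10 : F₁.eval 0 = 1 := he₁ ▸ hFe₁
      have hndvd : ¬ (Polynomial.X : Polynomial (R ⧸ mI)) ∣ F₁ := by
        rw [Polynomial.X_dvd_iff, Polynomial.coeff_zero_eq_eval_zero, hF10]
        exact one_ne_zero
      have hpowdvd : (Polynomial.X : Polynomial (R ⧸ mI)) ^ (m + 1) ∣ F₁ * F₀ := by
        rw [mul_comm, hprod]; exact dvd_mul_right _ _
      have hpow : (Polynomial.X : Polynomial (R ⧸ mI)) ^ (m + 1) ∣ F₀ :=
        Polynomial.prime_X.pow_dvd_of_dvd_mul_left _ hndvd hpowdvd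
      have hdvd1 : (Polynomial.X - Polynomial.C 1 : Polynomial (R ⧸ mI)) ∣ F₁ :=
        Polynomial.dvd_iff_isRoot.mpr (by rw [Polynomial.IsRoot, ← he₀]; exact h10)
      have h1le : 1 ≤ F₁.natDegree := by
        have h := Polynomial.natDegree_le_of_dvd hdvd1 hF₁ne
        rwa [Polynomial.natDegree_X_sub_C] at h
      have hm1 : m + 1 ≤ F₀.natDegree := by
        have h := Polynomial.natDegree_le_of_dvd hpow hF₀ne
        simpa using h
      omega
    · exact absurd (he₀.trans he₁.symm) hE
  rcases key with hk | hk
  · obtain ⟨c, hc⟩ : ∃ c : R, f₀ = Polynomial.X + Polynomial.C c :=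
      ⟨f₀.coeff 0, h₀.eq_X_add_C hk⟩
    have h0 : f.eval c = 0 := by
      rw [hf, Polynomial.eval_mul, hc]
      simp only [Polynomial.eval_add, Polynomial.eval_X, Polynomial.eval_C]
      have hcc : c + c = 0 := by linear_combination c * two0
      rw [hcc, zero_mul]
    rw [hevalf] at h0
    exact ha0 h0
  · obtain ⟨c, hc⟩ : ∃ c : R, f₁ = Polynomial.X + Polynomial.C c :=
      ⟨f₁.coeff 0, h₁.eq_X_add_C hk⟩
    have h0 : f.eval c = 0 := by
      rw [hf, Polynomial.eval_mul, hc]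
      simp only [Polynomial.eval_add, Polynomial.eval_X, Polynomial.eval_C]
      have hcc : c + c = 0 := by linear_combination c * two0
      rw [hcc, mul_zero]
    rw [hevalf] at h0
    exact ha0 h0
end

section
/- Let R be a commutative projective-free ring and n a positive integer. If T ∈ Mₙ(R) is a strongly clean element of Mₙ(R), then the characteristic polynomial χ_T(t) = det(tI − T) has an SR factorization. -/
universe u

lemma my_eval_charpoly {m : Type*} [DecidableEq m] [Fintype m] {R : Type*} [CommRing R]
    (M : Matrix m m R) (r : R) :
    M.charpoly.eval r = (r • (1 : Matrix m m R) - M).det := by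
  rw [Matrix.charpoly, ← Polynomial.coe_evalRingHom, RingHom.map_det]
  congr 1
  ext i j
  by_cases h : i = j
  · subst h
    simp [Matrix.charmatrix_apply_eq, Matrix.one_apply]
  · simp [Matrix.charmatrix_apply_ne _ _ _ h, Matrix.one_apply_ne h]

lemma my_restrict_isUnit {R M : Type*} [CommRing R] [AddCommGroup M] [Module R M]
    {p : Submodule R M} (v v' : Module.End R M)
    (hv : ∀ x ∈ p, v x ∈ p) (hv' : ∀ x ∈ p, v' x ∈ p)
    (h1 : v ∘ₗ v' = LinearMap.id) (h2 : v' ∘ₗ v = LinearMap.id) :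
    IsUnit (v.restrict hv) := by
  refine isUnit_iff_exists.mpr ⟨v'.restrict hv', ?_, ?_⟩
  · refine LinearMap.ext fun x => Subtype.ext ?_
    have := DFunLike.congr_fun h1 (x : M)
    simpa [Module.End.mul_apply, LinearMap.restrict_coe_apply] using this
  · refine LinearMap.ext fun x => Subtype.ext ?_
    have := DFunLike.congr_fun h2 (x : M)
    simpa [Module.End.mul_apply, LinearMap.restrict_coe_apply] using this

set_option synthInstance.maxHeartbeats 400000 in
set_option maxHeartbeats 1000000 in
/-- If `R` is a commutative projective-free ring and `T ∈ Mₙ(R)` is strongly clean, then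
the characteristic polynomial of `T` has an SR factorization. -/
theorem charpoly_hasSRFactorization_of_isStronglyClean
    {R : Type u} [CommRing R] (hR : ProjectiveFree R) {n : ℕ} (hn : 0 < n)
    (T : Matrix (Fin n) (Fin n) R) (hT : IsStronglyClean T) :
    HasSRFactorization (Matrix.charpoly T) := by
  classical
  obtain ⟨E, U, hE, hU, hTEU, hcomm⟩ := hT
  -- R is nontrivial
  have hnt : Nontrivial R := by
    by_contra h
    rw [not_nontrivial_iff_subsingleton] at h
    obtain ⟨r, -, hru⟩ := hR R inferInstance inferInstance
    have h0 : (0 : ℕ) = r := hru 0 ⟨Module.Basis.empty _⟩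
    have h1 : (1 : ℕ) = r := hru 1 ⟨Module.Basis.singleton (Fin 1) R⟩
    exact absurd (h0.trans h1.symm) (by norm_num)
  set V := (Fin n → R) with hV
  let e : Module.End R V := Matrix.toLin' E
  let u : Module.End R V := Matrix.toLin' U
  let t : Module.End R V := Matrix.toLin' T
  have hee : e ∘ₗ e = e := by
    rw [show e ∘ₗ e = Matrix.toLin' (E * E) from (Matrix.toLin'_mul E E).symm, hE]
  -- projections
  let p : Submodule R V := LinearMap.range e
  let q : Submodule R V := LinearMap.ker e
  have hproj : LinearMap.IsProj p e :=
    ⟨fun x => ⟨x, rfl⟩, by rintro x ⟨y, rfl⟩; exact DFunLike.congr_fun hee y⟩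
  have hcompl : IsCompl p q := hproj.isCompl
  -- finiteness and projectivity of p, q
  have hker : q = LinearMap.range (LinearMap.id - e) := by
    ext x
    constructor
    · intro hx
      exact ⟨x, by simp [LinearMap.sub_apply, LinearMap.mem_ker.mp hx]⟩
    · rintro ⟨y, rfl⟩
      have h2 := DFunLike.congr_fun hee y
      simp only [LinearMap.coe_comp, Function.comp_apply] at h2
      exact LinearMap.mem_ker.mpr
        (by rw [LinearMap.sub_apply, LinearMap.id_apply, map_sub, h2, sub_self])
  have key : ∀ (f : Module.End R V), f ∘ₗ f = f →
      Module.Projective R (LinearMap.range f) := by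
    intro f hf
    have hproj' : LinearMap.IsProj (LinearMap.range f) f :=
      ⟨fun x => ⟨x, rfl⟩, by rintro x ⟨y, rfl⟩; exact DFunLike.congr_fun hf y⟩
    exact Module.Projective.of_split (LinearMap.range f).subtype hproj'.codRestrict
      (by
        refine LinearMap.ext fun x => Subtype.ext ?_
        simpa [LinearMap.IsProj.codRestrict_apply] using hproj'.map_id x x.2)
  have h1e : (LinearMap.id - e) ∘ₗ (LinearMap.id - e) = LinearMap.id - e := by
    refine LinearMap.ext fun x => ?_
    have h2 := DFunLike.congr_fun hee x
    simp only [LinearMap.coe_comp, Function.comp_apply] at h2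
    simp only [LinearMap.coe_comp, Function.comp_apply, LinearMap.sub_apply,
      LinearMap.id_apply, map_sub, h2]
    abel
  haveI hfinp : Module.Finite R p := Module.Finite.range e
  haveI hfinq : Module.Finite R q :=
    Module.Finite.equiv (LinearEquiv.ofEq _ _ hker).symm
  haveI hprojp : Module.Projective R p := key e hee
  haveI := key _ h1e
  haveI hprojq : Module.Projective R q :=
    Module.Projective.of_equiv (LinearEquiv.ofEq _ _ hker).symm
  obtain ⟨r₁, ⟨b₁⟩, -⟩ := hR p hfinp hprojp
  obtain ⟨r₀, ⟨b₀⟩, -⟩ := hR q hfinq hprojq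
  haveI := Module.Free.of_basis b₁
  haveI := Module.Free.of_basis b₀
  -- commutation facts
  have hTE : T * E = E * T := by
    rw [hTEU, add_mul, mul_add, hE.eq, hcomm]
  have hUE : U * E = E * U := hcomm.symm
  set U' : Matrix (Fin n) (Fin n) R := ↑(hU.unit⁻¹) with hU'def
  have hUU' : U * U' = 1 := hU.unit.mul_inv
  have hU'U : U' * U = 1 := hU.unit.inv_mul
  have hU'E : U' * E = E * U' := by
    calc U' * E = U' * E * (U * U') := by rw [hUU', mul_one]
      _ = U' * (E * U) * U' := by rw [← mul_assoc, mul_assoc U' E U]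
      _ = U' * (U * E) * U' := by rw [hcomm]
      _ = U' * U * (E * U') := by rw [← mul_assoc U' U E, mul_assoc (U' * U) E U']
      _ = E * U' := by rw [hU'U, one_mul]
  -- preservation lemmas
  have comm_toLin : ∀ (A : Matrix (Fin n) (Fin n) R), A * E = E * A →
      (∀ x ∈ p, Matrix.toLin' A x ∈ p) ∧ (∀ x ∈ q, Matrix.toLin' A x ∈ q) := by
    intro A hA
    have h : Matrix.toLin' A ∘ₗ e = e ∘ₗ Matrix.toLin' A := by
      rw [← Matrix.toLin'_mul, ← Matrix.toLin'_mul, hA]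
    constructor
    · rintro x ⟨y, rfl⟩
      exact ⟨Matrix.toLin' A y, (DFunLike.congr_fun h y).symm⟩
    · intro x hx
      have h2 := DFunLike.congr_fun h x
      simp only [LinearMap.coe_comp, Function.comp_apply] at h2
      simp only [q, LinearMap.mem_ker] at hx ⊢
      rw [← h2, hx, map_zero]
  obtain ⟨hp_t, hq_t⟩ := comm_toLin T hTE
  obtain ⟨hp_u, hq_u⟩ := comm_toLin U hUE
  obtain ⟨hp_u', hq_u'⟩ := comm_toLin U' hU'E
  let t₁ : Module.End R p := t.restrict hp_t
  let t₀ : Module.End R q := t.restrict hq_t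
  -- charpoly splits
  let ε := Submodule.prodEquivOfIsCompl p q hcompl
  have ht_eq : t = ε.conj (t₁.prodMap t₀) := by
    apply LinearMap.ext
    intro x
    simp only [LinearEquiv.conj_apply, LinearMap.coe_comp, Function.comp_apply,
      LinearEquiv.coe_coe]
    have hx : ((ε.symm x).1 : V) + ((ε.symm x).2 : V) = x := by
      have := ε.apply_symm_apply x
      rwa [Submodule.coe_prodEquivOfIsCompl'] at this
    rw [Submodule.coe_prodEquivOfIsCompl']
    simp only [LinearMap.prodMap_apply, LinearMap.restrict_coe_apply, t₁, t₀]
    rw [← map_add, hx]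
  have hchar : Matrix.charpoly T = LinearMap.charpoly t := by
    rw [← LinearMap.charpoly_toMatrix t (Pi.basisFun R (Fin n)),
      LinearMap.toMatrix_eq_toMatrix', LinearMap.toMatrix'_toLin']
  have hsplit : Matrix.charpoly T = t₀.charpoly * t₁.charpoly := by
    rw [hchar, ht_eq, LinearEquiv.charpoly_conj, LinearMap.charpoly_prodMap, mul_comm]
  -- the unit u restricted is a unit of End p and End q
  have huu' : u ∘ₗ Matrix.toLin' U' = LinearMap.id := by
    rw [← Matrix.toLin'_mul, hUU', Matrix.toLin'_one]
  have hu'u : Matrix.toLin' U' ∘ₗ u = LinearMap.id := by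
    rw [← Matrix.toLin'_mul, hU'U, Matrix.toLin'_one]
  have hu₁ : IsUnit (u.restrict hp_u) := my_restrict_isUnit u _ hp_u hp_u' huu' hu'u
  have hu₀ : IsUnit (u.restrict hq_u) := my_restrict_isUnit u _ hq_u hq_u' huu' hu'u
  have hadd : ∀ y : V, t y = e y + u y := fun y => by
    rw [show t = e + u by simp only [t, e, u, hTEU, map_add], LinearMap.add_apply]
  -- identify restrictions
  have ht₀ : t₀ = u.restrict hq_u := by
    refine LinearMap.ext fun x => Subtype.ext ?_
    have hex : e (x : V) = 0 := LinearMap.mem_ker.mp x.2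
    simp only [t₀, LinearMap.restrict_coe_apply, hadd, hex, zero_add]
  have ht₁ : t₁ = LinearMap.id + u.restrict hp_u := by
    refine LinearMap.ext fun x => Subtype.ext ?_
    have hex : e (x : V) = (x : V) := hproj.map_id _ x.2
    simp only [t₁, LinearMap.restrict_coe_apply, LinearMap.add_apply, LinearMap.id_apply,
      Submodule.coe_add, hadd, hex]
  -- evaluations
  have hev₀ : IsUnit (Polynomial.eval (0 : R) t₀.charpoly) := by
    rw [← LinearMap.charpoly_toMatrix t₀ b₀, my_eval_charpoly, zero_smul, zero_sub,
      Matrix.det_neg, LinearMap.det_toMatrix, ht₀]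
    exact (isUnit_one.neg.pow _).mul (hu₀.map LinearMap.det)
  have hev₁ : IsUnit (Polynomial.eval (1 : R) t₁.charpoly) := by
    rw [← LinearMap.charpoly_toMatrix t₁ b₁, my_eval_charpoly, one_smul, ht₁]
    rw [show LinearMap.toMatrix b₁ b₁ (LinearMap.id + u.restrict hp_u)
          = 1 + LinearMap.toMatrix b₁ b₁ (u.restrict hp_u) by
        rw [map_add, LinearMap.toMatrix_id]]
    rw [show (1 : Matrix (Fin r₁) (Fin r₁) R) - (1 + LinearMap.toMatrix b₁ b₁ (u.restrict hp_u))
          = -(LinearMap.toMatrix b₁ b₁ (u.restrict hp_u)) by abel]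
    rw [Matrix.det_neg, LinearMap.det_toMatrix]
    exact (isUnit_one.neg.pow _).mul (hu₁.map LinearMap.det)
  exact ⟨t₀.charpoly, t₁.charpoly, hsplit, t₀.charpoly_monic, t₁.charpoly_monic,
    0, 1, IsIdempotentElem.zero, IsIdempotentElem.one, zero_ne_one, hev₀, hev₁⟩
end

section
/- Every commutative semilocal ring (a commutative ring with only finitely many maximal ideals) has the unimodular lifting property (ULP). -/
/-- A commutative ring has the *unimodular lifting property* (ULP) if for every pair of
monic polynomials `f₀, f₁` over `R`, unimodularity of the reductions of `(f₀, f₁)` modulo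
every maximal ideal of `R` implies unimodularity of `(f₀, f₁)` in `R[t]`. -/
def HasULP (R : Type*) [CommRing R] : Prop :=
  ∀ f₀ f₁ : Polynomial R, f₀.Monic → f₁.Monic →
    (∀ m : Ideal R, m.IsMaximal →
      IsCoprime (Polynomial.map (Ideal.Quotient.mk m) f₀)
        (Polynomial.map (Ideal.Quotient.mk m) f₁)) →
    IsCoprime f₀ f₁

/-- Every commutative semilocal ring (finitely many maximal ideals) has the unimodular
lifting property. -/
theorem hasULP_of_semilocal (R : Type*) [CommRing R]
    (h : {I : Ideal R | I.IsMaximal}.Finite) : HasULP R := by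
  intro f₀ f₁ hf₀ hf₁ hcop
  by_contra hnc
  have hspan : Ideal.span {f₀, f₁} ≠ ⊤ := by
    intro htop
    apply hnc
    have h1 : (1 : Polynomial R) ∈ Ideal.span {f₀, f₁} := htop ▸ Submodule.mem_top
    obtain ⟨a, b, hab⟩ := Ideal.mem_span_pair.mp h1
    exact ⟨a, b, hab⟩
  obtain ⟨M, hM, hle⟩ := Ideal.exists_le_maximal _ hspan
  have hf₀M : f₀ ∈ M := hle (Ideal.subset_span (by simp))
  have hf₁M : f₁ ∈ M := hle (Ideal.subset_span (by simp))
  -- `A := AdjoinRoot f₀` is a module-finite, hence integral, `R`-algebra.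
  haveI : Module.Finite R (AdjoinRoot f₀) :=
    Module.Finite.of_basis (AdjoinRoot.powerBasis' hf₀).basis
  haveI hAint : Algebra.IsIntegral R (AdjoinRoot f₀) := Algebra.IsIntegral.of_finite R _
  have hπsurj : Function.Surjective (AdjoinRoot.mk f₀) := AdjoinRoot.mk_surjective
  have hker : RingHom.ker (AdjoinRoot.mk f₀) = Ideal.span {f₀} := Ideal.mk_ker
  set M' := M.map (AdjoinRoot.mk f₀) with hM'def
  have hcomap : M'.comap (AdjoinRoot.mk f₀) = M := by
    rw [hM'def, Ideal.comap_map_of_surjective _ hπsurj, ← RingHom.ker_eq_comap_bot, hker, sup_eq_left]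
    exact le_trans (Ideal.span_le.mpr (by simpa using hf₀M)) le_rfl
  have hM'ne : M' ≠ ⊤ := by
    intro htop
    have : M'.comap (AdjoinRoot.mk f₀) = ⊤ := by rw [htop, Ideal.comap_top]
    rw [hcomap] at this
    exact hM.ne_top this
  haveI hM' : M'.IsMaximal :=
    (Ideal.map_eq_top_or_isMaximal_of_surjective _ hπsurj hM).resolve_left hM'ne
  have hmmax : (M.comap (Polynomial.C : R →+* Polynomial R)).IsMaximal := by
    have heq : M.comap (Polynomial.C : R →+* Polynomial R)
        = M'.comap (algebraMap R (AdjoinRoot f₀)) := by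
      rw [AdjoinRoot.algebraMap_eq]
      rw [show AdjoinRoot.of f₀ = (AdjoinRoot.mk f₀).comp Polynomial.C from rfl]
      rw [← Ideal.comap_comap, hcomap]
    rw [heq]
    exact Ideal.isMaximal_comap_of_isIntegral_of_isMaximal M'
  set m := M.comap (Polynomial.C : R →+* Polynomial R) with hmdef
  obtain ⟨a, b, hab⟩ := hcop m hmmax
  obtain ⟨A, hA⟩ := Polynomial.map_surjective _ Ideal.Quotient.mk_surjective a
  obtain ⟨B, hB⟩ := Polynomial.map_surjective _ Ideal.Quotient.mk_surjective b
  set g : Polynomial R := A * f₀ + B * f₁ - 1 with hgdef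
  have hgmap : g.map (Ideal.Quotient.mk m) = 0 := by
    simp only [hgdef, Polynomial.map_sub, Polynomial.map_add, Polynomial.map_mul,
      Polynomial.map_one, hA, hB, hab, sub_self]
  have hgM : g ∈ M := by
    apply Ideal.polynomial_mem_ideal_of_coeff_mem_ideal
    intro n
    rw [← hmdef, ← Ideal.Quotient.eq_zero_iff_mem]
    have := congrArg (fun p => Polynomial.coeff p n) hgmap
    simpa [Polynomial.coeff_map] using this
  have h1M : (1 : Polynomial R) ∈ M := by
    have : (1 : Polynomial R) = A * f₀ + B * f₁ - g := by ring
    rw [this]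
    exact Ideal.sub_mem _ (Ideal.add_mem _ (Ideal.mul_mem_left _ _ hf₀M)
      (Ideal.mul_mem_left _ _ hf₁M)) hgM
  exact hM.ne_top (Ideal.eq_top_iff_one M |>.mpr h1M)
end

section
/- Every unique factorization domain has the unimodular lifting property (ULP). -/
open Polynomial in
/-- Every unique factorization domain has the unimodular lifting property. -/
theorem hasULP_of_ufd (R : Type*) [CommRing R] [IsDomain R]
    [UniqueFactorizationMonoid R] : HasULP R := by
  intro f₀ f₁ h₀ h₁ hcop
  by_contra hnc
  set I : Ideal R[X] := Ideal.span {f₀, f₁} with hIdef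
  have hf₀I : f₀ ∈ I := Ideal.subset_span (by simp)
  have hf₁I : f₁ ∈ I := Ideal.subset_span (by simp)
  have hItop : I ≠ ⊤ := by
    intro h
    exact hnc (Ideal.mem_span_pair.mp (h ▸ Submodule.mem_top : (1 : R[X]) ∈ I))
  have hJ : I.comap (C : R →+* R[X]) ≠ ⊤ := by
    intro h
    apply hItop
    rw [Ideal.eq_top_iff_one] at h ⊢
    simpa using h
  obtain ⟨m, hm, hJm⟩ := Ideal.exists_le_maximal _ hJ
  obtain ⟨a, b, hab⟩ := hcop m hm
  obtain ⟨A, hA⟩ := Polynomial.map_surjective _ Ideal.Quotient.mk_surjective a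
  obtain ⟨B, hB⟩ := Polynomial.map_surjective _ Ideal.Quotient.mk_surjective b
  set g : R[X] := A * f₀ + B * f₁ with hg
  have hgI : g ∈ I := I.add_mem (I.mul_mem_left _ hf₀I) (I.mul_mem_left _ hf₁I)
  have hker : g - 1 ∈ m.map (C : R →+* R[X]) := by
    have h1 : g - 1 ∈ RingHom.ker (mapRingHom (Ideal.Quotient.mk m)) := by
      simp [RingHom.mem_ker, hg, hA, hB, hab]
    rwa [Polynomial.ker_mapRingHom, Ideal.mk_ker] at h1
  set π := Ideal.Quotient.mk I with hπ
  have hCs : ∀ (r : R) (p : R[X]), π (C r * p) = r • π p := fun r p => by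
    rw [← smul_eq_C_mul]; rfl
  -- f₀ has positive degree
  have hf₀ne : f₀ ≠ 1 := fun h => hItop ((Ideal.eq_top_iff_one I).mpr (h ▸ hf₀I))
  have hdeg : 0 < f₀.natDegree := by
    rcases Nat.eq_zero_or_pos f₀.natDegree with h | h
    · exact absurd (h₀.natDegree_eq_zero.mp h) hf₀ne
    · exact h
  -- M := R[X] ⧸ I is a finitely generated R-module
  have hfg : (⊤ : Submodule R (R[X] ⧸ I)).FG := by
    classical
    refine ⟨(Finset.range f₀.natDegree).image (fun i => π (X ^ i)), ?_⟩
    rw [eq_top_iff]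
    rintro x -
    obtain ⟨p, rfl⟩ := Ideal.Quotient.mk_surjective x
    have hmod : π p = π (p %ₘ f₀) := by
      rw [Ideal.Quotient.mk_eq_mk_iff_sub_mem]
      have := p.modByMonic_add_div f₀
      have : p - p %ₘ f₀ = f₀ * (p /ₘ f₀) := by linear_combination -this
      rw [this]
      exact I.mul_mem_right _ hf₀I
    rw [hmod]
    have hlt : (p %ₘ f₀).natDegree < f₀.natDegree := by
      rcases eq_or_ne (p %ₘ f₀) 0 with h | h
      · simpa [h] using hdeg
      · exact natDegree_lt_natDegree h (degree_modByMonic_lt p h₀)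
    rw [(p %ₘ f₀).as_sum_range' _ hlt, map_sum]
    refine Submodule.sum_mem _ fun i hi => ?_
    rw [← C_mul_X_pow_eq_monomial, hCs]
    refine Submodule.smul_mem _ _ (Submodule.subset_span ?_)
    exact Finset.mem_image.mpr ⟨i, hi, rfl⟩
  -- m • ⊤ is closed under multiplication by the quotient ring
  have hmul : ∀ (y x : R[X] ⧸ I), x ∈ m • (⊤ : Submodule R (R[X] ⧸ I)) →
      y * x ∈ m • (⊤ : Submodule R (R[X] ⧸ I)) := by
    intro y x hx
    refine Submodule.smul_induction_on hx (fun r hr z _ => ?_) (fun u v hu hv => ?_)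
    · rw [mul_smul_comm]
      exact Submodule.smul_mem_smul hr Submodule.mem_top
    · rw [mul_add]; exact Submodule.add_mem _ hu hv
  -- 1 ∈ m • ⊤
  have hone : (1 : R[X] ⧸ I) ∈ m • (⊤ : Submodule R (R[X] ⧸ I)) := by
    have hmem : ∀ x ∈ m.map (C : R →+* R[X]), π x ∈ m • (⊤ : Submodule R (R[X] ⧸ I)) := by
      intro x hx
      refine Submodule.span_induction ?_ ?_ ?_ ?_ hx
      · rintro _ ⟨r, hr, rfl⟩
        rw [← mul_one (C r), hCs]
        exact Submodule.smul_mem_smul hr Submodule.mem_top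
      · simp only [map_zero] at *; exact (m • (⊤ : Submodule R (R[X] ⧸ I))).zero_mem
      · intro u v _ _ hu hv
        rw [map_add]; exact Submodule.add_mem _ hu hv
      · intro q u _ hu
        rw [smul_eq_mul, map_mul]
        exact hmul _ _ hu
    have := hmem _ hker
    rw [map_sub, Ideal.Quotient.eq_zero_iff_mem.mpr hgI, zero_sub, map_one] at this
    simpa using (m • (⊤ : Submodule R (R[X] ⧸ I))).neg_mem this
  -- hence m • ⊤ = ⊤
  have hle : (⊤ : Submodule R (R[X] ⧸ I)) ≤ m • (⊤ : Submodule R (R[X] ⧸ I)) := by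
    intro x _
    rw [← mul_one x]
    exact hmul _ _ hone
  -- Nakayama
  obtain ⟨r, hr1, hr0⟩ :=
    Submodule.exists_sub_one_mem_and_smul_eq_zero_of_fg_of_le_smul m ⊤ hfg hle
  have hrI : r ∈ I.comap (C : R →+* R[X]) := by
    have := hr0 (π 1) Submodule.mem_top
    rw [← hCs, mul_one] at this
    exact Ideal.mem_comap.mpr (Ideal.Quotient.eq_zero_iff_mem.mp this)
  have h1m : (1 : R) ∈ m := by
    have := m.sub_mem (hJm hrI) hr1
    simpa using this
  exact hm.ne_top ((Ideal.eq_top_iff_one m).mpr h1m)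
end

section
/- Let R be a commutative projective-free ring and let A ∈ Mₙ(R) be purely singular. Then A is a strongly clean element of Mₙ(R) if and only if there exist monic polynomials f₀(t), f₁(t) ∈ R[t] with χ_A(t) = f₀(t)f₁(t), f₀(0) a unit of R, and f₁(1) a unit of R, and an invertible matrix P ∈ Mₙ(R) such that P⁻¹AP is the block diagonal matrix with diagonal blocks T₀ and T₁ satisfying χ_{T₀}(t) = f₀(t) and χ_{T₁}(t) = f₁(t). -/
universe u

open Matrix Polynomial

lemma aux_eval_charpoly {R : Type*} [CommRing R] {m : ℕ} (M : Matrix (Fin m) (Fin m) R) (r : R) :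
    (M.charpoly).eval r = (Matrix.diagonal (fun _ => r) - M).det := by
  rw [Matrix.charpoly, ← Polynomial.coe_evalRingHom, RingHom.map_det]
  congr 1
  ext i j
  by_cases h : i = j
  · subst h
    simp [Matrix.charmatrix_apply_eq]
  · simp [Matrix.charmatrix_apply_ne _ _ _ h, Matrix.diagonal_apply_ne _ h, Matrix.one_apply_ne h]


/-- Let `R` be a commutative projective-free ring and `A ∈ Mₙ(R)` purely singular (neither
`A` nor `I - A` invertible). Then `A` is strongly clean iff there exist monic polynomials
`f₀, f₁` with `χ_A = f₀ f₁`, `f₀(0)` and `f₁(1)` units, and `A` is similar to a block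
diagonal matrix `diag(T₀, T₁)` with `χ_{T₀} = f₀` and `χ_{T₁} = f₁`. -/
theorem purelySingular_isStronglyClean_iff
    {R : Type u} [CommRing R] (hR : ProjectiveFree R) {n : ℕ}
    (A : Matrix (Fin n) (Fin n) R) (hA : ¬ IsUnit A)
    (hA' : ¬ IsUnit ((1 : Matrix (Fin n) (Fin n) R) - A)) :
    IsStronglyClean A ↔
      ∃ f₀ f₁ : Polynomial R, f₀.Monic ∧ f₁.Monic ∧ Matrix.charpoly A = f₀ * f₁ ∧
        IsUnit (Polynomial.eval 0 f₀) ∧ IsUnit (Polynomial.eval 1 f₁) ∧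
        ∃ (k l : ℕ) (e : Fin n ≃ (Fin k ⊕ Fin l)) (T₀ : Matrix (Fin k) (Fin k) R)
          (T₁ : Matrix (Fin l) (Fin l) R) (P Q : Matrix (Fin n) (Fin n) R),
          P * Q = 1 ∧ Q * P = 1 ∧
          Q * A * P = (Matrix.fromBlocks T₀ 0 0 T₁).submatrix e e ∧
          Matrix.charpoly T₀ = f₀ ∧ Matrix.charpoly T₁ = f₁ := by
  constructor
  · rintro ⟨E, U, hE, hU, hAEU, hcomm⟩
    haveI hnt : Nontrivial R := by
      rcases subsingleton_or_nontrivial R with h | h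
      · exact absurd (isUnit_of_subsingleton A) hA
      · exact h
    classical
    set φ : (Fin n → R) →ₗ[R] (Fin n → R) := Matrix.toLin' E with hφdef
    set ψ : (Fin n → R) →ₗ[R] (Fin n → R) := Matrix.toLin' U with hψdef
    have hφφ : φ ∘ₗ φ = φ := by
      rw [hφdef, ← Matrix.toLin'_mul, hE.eq]
    have hφψ : φ ∘ₗ ψ = ψ ∘ₗ φ := by
      rw [hφdef, hψdef, ← Matrix.toLin'_mul, ← Matrix.toLin'_mul, hcomm]
    -- the range and kernel of φ
    set p : Submodule R (Fin n → R) := LinearMap.range φ with hpdef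
    set q : Submodule R (Fin n → R) := LinearMap.ker φ with hqdef
    have hrange : ∀ x : Fin n → R, x ∈ p → φ x = x := by
      rintro x ⟨y, rfl⟩
      exact congrFun (congrArg DFunLike.coe hφφ) y
    -- projection onto p
    set prp : (Fin n → R) →ₗ[R] p := φ.codRestrict p (fun x => LinearMap.mem_range_self φ x)
      with hprp
    have hprp_comp : prp.comp p.subtype = LinearMap.id :=
      LinearMap.ext fun x => Subtype.ext (hrange x x.2)
    have hcompl : IsCompl p q := by
      have h := LinearMap.isCompl_of_proj (f := prp) (fun x => Subtype.ext (hrange x x.2))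
      rwa [LinearMap.ker_codRestrict] at h
    -- projection onto q
    set π : (Fin n → R) →ₗ[R] (Fin n → R) := LinearMap.id - φ with hπ
    have hπq : ∀ x, π x ∈ q := by
      intro x
      simp only [hqdef, LinearMap.mem_ker, hπ, LinearMap.sub_apply, LinearMap.id_apply, map_sub]
      rw [← LinearMap.comp_apply, hφφ, sub_self]
    set prq : (Fin n → R) →ₗ[R] q := π.codRestrict q hπq with hprq
    have hprq_comp : prq.comp q.subtype = LinearMap.id := by
      refine LinearMap.ext fun x => Subtype.ext ?_
      show (x : Fin n → R) - φ x = x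
      rw [show φ (x : Fin n → R) = 0 from x.2, sub_zero]
    -- finiteness and projectivity
    have finp : Module.Finite R p := Module.Finite.of_surjective prp (fun x =>
      ⟨x, Subtype.ext (hrange x x.2)⟩)
    have finq : Module.Finite R q := Module.Finite.of_surjective prq (by
      intro x
      refine ⟨x, Subtype.ext ?_⟩
      show (x : Fin n → R) - φ x = (x : Fin n → R)
      rw [show φ (x : Fin n → R) = 0 from x.2, sub_zero])
    have projp : Module.Projective R p := Module.Projective.of_split p.subtype prp hprp_comp
    have projq : Module.Projective R q := Module.Projective.of_split q.subtype prq hprq_comp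
    obtain ⟨k, ⟨bk⟩, -⟩ := hR q finq projq
    obtain ⟨l, ⟨bl⟩, -⟩ := hR p finp projp
    -- a basis of Fin n → R adapted to the decomposition
    set b : Module.Basis (Fin k ⊕ Fin l) R (Fin n → R) :=
      (bk.prod bl).map (Submodule.prodEquivOfIsCompl q p hcompl.symm) with hb
    have hbinl : ∀ i, b (Sum.inl i) = (bk i : Fin n → R) := by
      intro i
      rw [hb, Module.Basis.map_apply, Module.Basis.prod_apply]
      simp [Submodule.coe_prodEquivOfIsCompl']
    have hbinr : ∀ i, b (Sum.inr i) = (bl i : Fin n → R) := by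
      intro i
      rw [hb, Module.Basis.map_apply, Module.Basis.prod_apply]
      simp [Submodule.coe_prodEquivOfIsCompl']
    -- the matrix of φ w.r.t. b
    have hD : LinearMap.toMatrix b b φ = Matrix.fromBlocks 0 0 0 1 := by
      ext i j
      rw [LinearMap.toMatrix_apply]
      rcases j with j | j
      · have : φ (b (Sum.inl j)) = 0 := by rw [hbinl]; exact (bk j).2
        rcases i with i | i <;> simp [this]
      · have : φ (b (Sum.inr j)) = b (Sum.inr j) := by
          rw [hbinr]; exact hrange _ (bl j).2
        rw [this, Module.Basis.repr_self]
        rcases i with i | i <;>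
          simp [Finsupp.single_apply, Matrix.one_apply, eq_comm]
    set B : Matrix (Fin k ⊕ Fin l) (Fin k ⊕ Fin l) R := LinearMap.toMatrix b b ψ with hB
    have hDB : LinearMap.toMatrix b b φ * B = B * LinearMap.toMatrix b b φ := by
      rw [hB, ← LinearMap.toMatrix_comp b b b, ← LinearMap.toMatrix_comp b b b, hφψ]
    set T₀ := B.toBlocks₁₁ with hT₀
    set B₂₂ := B.toBlocks₂₂ with hB₂₂
    have hBblocks : B = Matrix.fromBlocks T₀ 0 0 B₂₂ := by
      have h21 : B.toBlocks₂₁ = 0 := by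
        ext i j
        have h : (LinearMap.toMatrix b b φ * B) (Sum.inr i) (Sum.inl j)
            = (B * LinearMap.toMatrix b b φ) (Sum.inr i) (Sum.inl j) := by rw [hDB]
        rw [hD] at h
        simpa [Matrix.toBlocks₂₁, Matrix.mul_apply, Fintype.sum_sum_type,
          Matrix.one_apply, ite_mul, mul_ite] using h
      have h12 : B.toBlocks₁₂ = 0 := by
        ext i j
        have h : (LinearMap.toMatrix b b φ * B) (Sum.inl i) (Sum.inr j)
            = (B * LinearMap.toMatrix b b φ) (Sum.inl i) (Sum.inr j) := by rw [hDB]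
        rw [hD] at h
        simpa [Matrix.toBlocks₁₂, Matrix.mul_apply, Fintype.sum_sum_type,
          Matrix.one_apply, ite_mul, mul_ite] using h.symm
      have h2 : Matrix.fromBlocks B.toBlocks₁₁ B.toBlocks₁₂ B.toBlocks₂₁ B.toBlocks₂₂
          = Matrix.fromBlocks T₀ 0 0 B₂₂ := by rw [h21, h12]
      exact (Matrix.fromBlocks_toBlocks B).symm.trans h2
    set T₁ := (1 : Matrix (Fin l) (Fin l) R) + B₂₂ with hT₁
    -- the matrix of toLin' A w.r.t. b
    have hAmat : LinearMap.toMatrix b b (Matrix.toLin' A) = Matrix.fromBlocks T₀ 0 0 T₁ := by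
      have : Matrix.toLin' A = φ + ψ := by
        rw [hφdef, hψdef, hAEU, map_add]
      rw [this, map_add, hD, ← hB, hBblocks, Matrix.fromBlocks_add]
      congr 1 <;> simp [hT₁, add_comm]
    -- determinant facts
    have hdetB : IsUnit B.det := by
      rw [hB, LinearMap.det_toMatrix]
      have : LinearMap.det ψ = U.det := by
        rw [hψdef, ← LinearMap.det_toMatrix' , LinearMap.toMatrix'_toLin']
      rw [this]
      exact hU.map (Matrix.detMonoidHom)
    have hdetT₀ : IsUnit T₀.det ∧ IsUnit B₂₂.det := by
      rw [hBblocks, Matrix.det_fromBlocks_zero₂₁] at hdetB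
      exact ⟨isUnit_of_mul_isUnit_left hdetB, isUnit_of_mul_isUnit_right hdetB⟩
    -- the index equivalence and the change of bases
    set e : Fin n ≃ (Fin k ⊕ Fin l) := (Pi.basisFun R (Fin n)).indexEquiv b with he
    set c : Module.Basis (Fin n) R (Fin n → R) := b.reindex e.symm with hc
    have hcc : LinearMap.toMatrix c c (Matrix.toLin' A)
        = (LinearMap.toMatrix b b (Matrix.toLin' A)).submatrix e e := by
      ext i j
      rw [LinearMap.toMatrix_apply, Matrix.submatrix_apply, LinearMap.toMatrix_apply, hc]
      simp
    refine ⟨T₀.charpoly, T₁.charpoly, T₀.charpoly_monic, T₁.charpoly_monic, ?_, ?_, ?_,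
      k, l, e, T₀, T₁, (Pi.basisFun R (Fin n)).toMatrix c, c.toMatrix (Pi.basisFun R (Fin n)),
      Module.Basis.toMatrix_mul_toMatrix_flip _ _, Module.Basis.toMatrix_mul_toMatrix_flip _ _, ?_, rfl, rfl⟩
    · -- charpoly factorization
      have h1 : A.charpoly = (Matrix.toLin' A).charpoly := by
        rw [← LinearMap.charpoly_toMatrix (Matrix.toLin' A) (Pi.basisFun R (Fin n)),
          LinearMap.toMatrix_eq_toMatrix', LinearMap.toMatrix'_toLin']
      rw [h1, ← LinearMap.charpoly_toMatrix (Matrix.toLin' A) b, hAmat,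
        Matrix.charpoly_fromBlocks_zero₂₁]
    · -- eval 0 charpoly T₀ is a unit
      rw [aux_eval_charpoly]
      have : (Matrix.diagonal (fun _ => (0:R)) - T₀) = (-1 : R) • T₀ := by
        ext i j; simp
      rw [this, Matrix.det_smul]
      exact ((isUnit_one.neg : IsUnit (-1 : R)).pow _).mul hdetT₀.1
    · -- eval 1 charpoly T₁ is a unit
      rw [aux_eval_charpoly]
      have : (Matrix.diagonal (fun _ => (1:R)) - T₁) = (-1 : R) • B₂₂ := by
        ext i j
        rcases eq_or_ne i j with rfl | h
        · simp [hT₁, Matrix.one_apply]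
        · simp [hT₁, Matrix.diagonal_apply_ne _ h, Matrix.one_apply_ne h]
      rw [this, Matrix.det_smul]
      exact ((isUnit_one.neg : IsUnit (-1 : R)).pow _).mul hdetT₀.2
    · -- the conjugation identity
      have := basis_toMatrix_mul_linearMap_toMatrix_mul_basis_toMatrix
        c (Pi.basisFun R (Fin n)) c (Pi.basisFun R (Fin n)) (Matrix.toLin' A)
      rw [LinearMap.toMatrix_eq_toMatrix', LinearMap.toMatrix'_toLin'] at this
      rw [this, hcc, hAmat]
  · rintro ⟨f₀, f₁, -, -, -, h0, h1, k, l, e, T₀, T₁, P, Q, hPQ, hQP, hQAP, hcT₀, hcT₁⟩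
    rw [← hcT₀] at h0
    rw [← hcT₁] at h1
    have hdT₀ : IsUnit T₀.det := by
      rw [aux_eval_charpoly] at h0
      have : (Matrix.diagonal (fun _ => (0:R)) - T₀) = (-1 : R) • T₀ := by
        ext i j; simp
      rw [this, Matrix.det_smul] at h0
      exact isUnit_of_mul_isUnit_right h0
    have hdT₁ : IsUnit (T₁ - 1).det := by
      rw [aux_eval_charpoly] at h1
      have : (T₁ - 1) = (-1 : R) • (Matrix.diagonal (fun _ => (1:R)) - T₁) := by
        ext i j; by_cases h : i = j <;>
          simp [Matrix.diagonal_apply_ne, Matrix.one_apply, h, sub_eq_neg_add]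
      rw [this, Matrix.det_smul]
      exact (IsUnit.pow _ (IsUnit.neg (isUnit_one : IsUnit (1:R)))).mul h1
    set D : Matrix (Fin k ⊕ Fin l) (Fin k ⊕ Fin l) R := Matrix.fromBlocks 0 0 0 (1 : Matrix (Fin l) (Fin l) R) with hD
    set S : Matrix (Fin k ⊕ Fin l) (Fin k ⊕ Fin l) R := Matrix.fromBlocks T₀ 0 0 (T₁ - 1) with hS
    refine ⟨P * D.submatrix e e * Q, P * S.submatrix e e * Q, ?_, ?_, ?_, ?_⟩
    · show _ * _ = _
      calc P * D.submatrix e e * Q * (P * D.submatrix e e * Q)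
          = P * (D.submatrix e e * (Q * P) * D.submatrix e e) * Q := by noncomm_ring
        _ = P * (D * D).submatrix e e * Q := by
            rw [hQP, Matrix.mul_one, Matrix.submatrix_mul_equiv]
        _ = P * D.submatrix e e * Q := by
            have : D * D = D := by rw [hD, Matrix.fromBlocks_multiply]; simp
            rw [this]
    · rw [Matrix.isUnit_iff_isUnit_det]
      have hdet : (P * S.submatrix e e * Q).det = S.det * (P.det * Q.det) := by
        rw [Matrix.det_mul, Matrix.det_mul, Matrix.det_submatrix_equiv_self]; ring
      have hPQdet : P.det * Q.det = 1 := by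
        rw [← Matrix.det_mul, hPQ, Matrix.det_one]
      rw [hdet, hPQdet, mul_one, hS, Matrix.det_fromBlocks_zero₂₁]
      exact hdT₀.mul hdT₁
    · have hA : A = P * (Matrix.fromBlocks T₀ 0 0 T₁).submatrix e e * Q := by
        calc A = (P * Q) * A * (P * Q) := by rw [hPQ]; noncomm_ring
          _ = P * (Q * A * P) * Q := by noncomm_ring
          _ = _ := by rw [hQAP]
      have hDSsum : D + S = Matrix.fromBlocks T₀ 0 0 T₁ := by
        rw [hD, hS, Matrix.fromBlocks_add]
        congr 1 <;> simp
      rw [hA, ← Matrix.add_mul, ← Matrix.mul_add]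
      congr 2
      ext i j
      simp [← hDSsum, Matrix.submatrix_apply, Matrix.add_apply]
    · calc P * D.submatrix e e * Q * (P * S.submatrix e e * Q)
          = P * (D.submatrix e e * (Q * P) * S.submatrix e e) * Q := by noncomm_ring
        _ = P * (S.submatrix e e * (Q * P) * D.submatrix e e) * Q := by
            rw [hQP, Matrix.mul_one, Matrix.mul_one, Matrix.submatrix_mul_equiv,
              Matrix.submatrix_mul_equiv]
            have : D * S = S * D := by
              rw [hD, hS, Matrix.fromBlocks_multiply, Matrix.fromBlocks_multiply]; simp
            rw [this]
        _ = P * S.submatrix e e * Q * (P * D.submatrix e e * Q) := by noncomm_ring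
end

section
/- Let X be a completely regular Hausdorff topological space such that every prime ideal of the ring C(X, ℂ) of continuous complex-valued functions on X is maximal (i.e. X is a P-space relative to ℂ). Then C(X, ℂ) is strongly regular: for every f ∈ C(X, ℂ) there exists g ∈ C(X, ℂ) with f = f²g. -/
/-- In a reduced commutative ring in which every prime ideal is maximal,
every element `a` satisfies `a = a^2 * b` for some `b`. -/
theorem stronglyRegular_of_reduced_dimZero {R : Type*} [CommRing R] [IsReduced R]
    (hP : ∀ P : Ideal R, P.IsPrime → P.IsMaximal) (a : R) :
    ∃ b : R, a = a ^ 2 * b := by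
  -- the annihilator of `a` as an ideal
  set Ann : Ideal R :=
    { carrier := {x | x * a = 0}
      add_mem' := fun hx hy => by simp only [Set.mem_setOf_eq] at *; rw [add_mul, hx, hy, add_zero]
      zero_mem' := by simp
      smul_mem' := fun c x hx => by
        simp only [smul_eq_mul, Set.mem_setOf_eq] at *; rw [mul_assoc, hx, mul_zero] } with hAnn
  -- main claim: `span {a} ⊔ Ann = ⊤`
  have key : Ideal.span {a} ⊔ Ann = ⊤ := by
    by_contra h
    obtain ⟨M, hM, hle⟩ := Ideal.exists_le_maximal _ h
    have hMp : M.IsPrime := hM.isPrime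
    have haM : a ∈ M := hle (Ideal.mem_sup_left (Ideal.subset_span rfl))
    have hAnnM : Ann ≤ M := le_trans le_sup_right hle
    -- multiplicative set of elements `s * a^n` with `s ∉ M`
    set S : Submonoid R :=
      { carrier := {x | ∃ s n, s ∉ M ∧ x = s * a ^ n}
        mul_mem' := by
          rintro x y ⟨s, n, hs, rfl⟩ ⟨t, m, ht, rfl⟩
          exact ⟨s * t, n + m, fun h => ((hMp.mem_or_mem h).elim hs ht), by ring⟩
        one_mem' := ⟨1, 0, hMp.1 ∘ (Ideal.eq_top_iff_one M).2, by simp⟩ } with hS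
    by_cases h0 : (0 : R) ∈ S
    · obtain ⟨s, n, hs, hsn⟩ := h0
      rcases Nat.eq_zero_or_pos n with rfl | hn
      · simp at hsn; exact hs (hsn ▸ M.zero_mem)
      have : IsNilpotent (s * a) := by
        refine ⟨n, ?_⟩
        rw [mul_pow]
        calc s ^ n * a ^ n = s ^ (n - 1) * (s * a ^ n) := by
              rw [← mul_assoc, ← pow_succ, Nat.sub_add_cancel hn]
          _ = 0 := by rw [← hsn, mul_zero]
      have hsa : s * a = 0 := IsReduced.eq_zero _ this
      exact hs (hAnnM hsa)
    · have hdisj : Disjoint ((⊥ : Ideal R) : Set R) (S : Set R) := by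
        rw [Set.disjoint_left]
        rintro x hx hxS
        simp only [Ideal.mem_bot, SetLike.mem_coe] at hx
        exact h0 (hx ▸ hxS)
      obtain ⟨Q, hQ, -, hQS⟩ := Ideal.exists_le_prime_disjoint _ S hdisj
      have hQM : Q ≤ M := by
        intro x hx
        by_contra hxM
        exact (Set.disjoint_left.1 hQS) hx ⟨x, 0, hxM, by simp⟩
      have : Q = M := ((hP Q hQ).eq_of_le hM.ne_top hQM)
      have haS : a ∈ S := ⟨1, 1, hMp.1 ∘ (Ideal.eq_top_iff_one M).2, by simp⟩
      exact (Set.disjoint_left.1 hQS) (this ▸ haM) haS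
  -- extract `1 = r * a + c` with `c * a = 0`
  have h1 : (1 : R) ∈ Ideal.span {a} ⊔ Ann := key ▸ Submodule.mem_top
  rw [Submodule.mem_sup] at h1
  obtain ⟨y, hy, c, hc, hyc⟩ := h1
  obtain ⟨r, rfl⟩ := Ideal.mem_span_singleton'.1 hy
  refine ⟨r, ?_⟩
  have hca : c * a = 0 := hc
  calc a = (r * a + c) * a := by rw [hyc, one_mul]
    _ = a ^ 2 * r := by rw [add_mul, hca, add_zero]; ring

instance instIsReducedCX (X : Type*) [TopologicalSpace X] : IsReduced C(X, ℂ) := by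
  constructor
  rintro f ⟨n, hn⟩
  ext x
  have : (f x) ^ n = 0 := by
    have := congrArg (fun g : C(X, ℂ) => g x) hn
    simpa using this
  simpa using IsReduced.eq_zero _ ⟨n, this⟩

/-- If `X` is a completely regular Hausdorff space such that every prime ideal of
`C(X, ℂ)` is maximal (i.e. `X` is a P-space relative to `ℂ`), then `C(X, ℂ)` is
strongly regular: every `f` satisfies `f = f² g` for some `g`. -/
theorem stronglyRegular_of_pSpace (X : Type*) [TopologicalSpace X] [T2Space X]
    [CompletelyRegularSpace X]
    (hP : ∀ P : Ideal C(X, ℂ), P.IsPrime → P.IsMaximal) :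
    ∀ f : C(X, ℂ), ∃ g : C(X, ℂ), f = f ^ 2 * g :=
  stronglyRegular_of_reduced_dimZero hP
end

section
/- Let X be a completely regular Hausdorff topological space such that every prime ideal of the ring C(X, ℂ) of continuous complex-valued functions on X is maximal (i.e. X is a P-space relative to ℂ), and let n be a positive integer. Then the matrix ring Mₙ(C(X, ℂ)) is strongly π-regular: for every A ∈ Mₙ(C(X, ℂ)) there exist a positive integer k and matrices B, C ∈ Mₙ(C(X, ℂ)) such that A^k = A^{k+1}B and A^k = C A^{k+1}. -/
/-- A commutative ring in which every prime ideal is maximal is (strongly) π-regular: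
for every `a` there are `k > 0` and `b` with `a ^ k = a ^ (k + 1) * b`. -/
theorem aux_comm_pi_regular {S : Type*} [CommRing S]
    (hP : ∀ P : Ideal S, P.IsPrime → P.IsMaximal) (a : S) :
    ∃ k : ℕ, 0 < k ∧ ∃ b : S, a ^ k = a ^ (k + 1) * b := by
  rcases subsingleton_or_nontrivial S with hs | hs
  · exact ⟨1, one_pos, 1, Subsingleton.elim _ _⟩
  by_contra h
  push_neg at h
  -- the multiplicative set of elements `a ^ n - a ^ (n + 1) * x`, `n ≥ 1`
  set M : Submonoid S :=
    { carrier := {y | ∃ m : ℕ, ∃ x : S, 0 < m ∧ y = a ^ m - a ^ (m + 1) * x} ∪ {1}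
      one_mem' := Or.inr rfl
      mul_mem' := by
        rintro y z (⟨m, x, hm, rfl⟩ | hy) hz
        · rcases hz with ⟨m', x', hm', rfl⟩ | hz
          · refine Or.inl ⟨m + m', x + x' - a * (x * x'), by positivity, ?_⟩
            ring
          · simp only [Set.mem_singleton_iff] at hz
            exact Or.inl ⟨m, x, hm, by rw [hz, mul_one]⟩
        · simp only [Set.mem_singleton_iff] at hy
          rw [hy, one_mul]; exact hz } with hM
  have h0 : (0 : S) ∉ (M : Set S) := by
    rintro (⟨m, x, hm, hmx⟩ | h1)
    · exact h m hm x (sub_eq_zero.mp hmx.symm)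
    · exact one_ne_zero (Set.mem_singleton_iff.mp h1).symm
  have hdisj : Disjoint ((⊥ : Ideal S) : Set S) (M : Set S) := by
    rw [Set.disjoint_left]
    rintro x hx
    simp only [Ideal.mem_bot, SetLike.mem_coe] at hx ⊢
    subst hx; exact h0
  obtain ⟨P, hPprime, -, hPdisj⟩ := Ideal.exists_le_prime_disjoint (⊥ : Ideal S) M hdisj
  have haM : a ∈ (M : Set S) := Or.inl ⟨1, 0, one_pos, by ring⟩
  have haP : a ∉ P := fun hc => Set.disjoint_left.mp hPdisj hc haM
  obtain ⟨x, c, hc, hxc⟩ := (hP P hPprime).exists_inv haP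
  -- then `a - a ^ 2 * x ∈ P ∩ M`, contradiction
  have hmem : a - a ^ 2 * x ∈ P := by
    have he : a - a ^ 2 * x = a * c := by linear_combination (-a) * hxc
    rw [he]
    exact P.mul_mem_left a hc
  have hMmem : a - a ^ 2 * x ∈ (M : Set S) := Or.inl ⟨1, x, one_pos, by ring⟩
  exact Set.disjoint_left.mp hPdisj hmem hMmem

/-- Matrix π-regularity over an abstract commutative ring all of whose primes are
maximal. -/
theorem aux_matrix_pi_regular {R : Type*} [CommRing R]
    (hP : ∀ P : Ideal R, P.IsPrime → P.IsMaximal) {n : ℕ}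
    (A : Matrix (Fin n) (Fin n) R) : ∃ k : ℕ, 0 < k ∧
      ∃ B C : Matrix (Fin n) (Fin n) R,
        A ^ k = A ^ (k + 1) * B ∧ A ^ k = C * A ^ (k + 1) := by
  -- the commutative ring `R[X] / ker (aeval A)`, isomorphic to `R[A]`
  set T := Polynomial R ⧸ RingHom.ker (Polynomial.aeval A : Polynomial R →ₐ[R] _) with hT
  set f : T →ₐ[R] Matrix (Fin n) (Fin n) R :=
    Ideal.kerLiftAlg (Polynomial.aeval A : Polynomial R →ₐ[R] _) with hf
  have hfinj : Function.Injective f := Ideal.kerLiftAlg_injective _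
  -- `T` is integral over `R`
  haveI : Algebra.IsIntegral R T := by
    constructor
    intro t
    obtain ⟨q, hq, hq0⟩ := Matrix.isIntegral (f t)
    refine ⟨q, hq, hfinj ?_⟩
    rw [← Polynomial.aeval_def] at hq0 ⊢
    rw [map_zero, ← Polynomial.aeval_algHom_apply, hq0]
  -- every prime ideal of `T` is maximal
  have hP' : ∀ P : Ideal T, P.IsPrime → P.IsMaximal := by
    intro P hPp
    haveI := hPp
    exact Ideal.isMaximal_of_isIntegral_of_isMaximal_comap P
      (hP _ (Ideal.IsPrime.comap _))
  obtain ⟨k, hk, b, hb⟩ :=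
    aux_comm_pi_regular hP' (Ideal.Quotient.mk _ (Polynomial.X : Polynomial R))
  have hfX : f (Ideal.Quotient.mk _ (Polynomial.X : Polynomial R)) = A := by
    rw [hf, Ideal.kerLiftAlg_mk, Polynomial.aeval_X]
  refine ⟨k, hk, f b, f b, ?_, ?_⟩
  · have := congrArg f hb
    rw [map_mul, map_pow, map_pow, hfX] at this
    exact this
  · have hb' := hb.trans (mul_comm _ b)
    have := congrArg f hb'
    rw [map_mul, map_pow, map_pow, hfX] at this
    exact this

/-- If `X` is a completely regular Hausdorff space such that every prime ideal of
`C(X, ℂ)` is maximal (i.e. `X` is a P-space relative to `ℂ`), then for every positive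
integer `n` the matrix ring `Mₙ(C(X, ℂ))` is strongly π-regular. -/
theorem matrix_stronglyPiRegular_of_pSpace (X : Type*) [TopologicalSpace X] [T2Space X]
    [CompletelyRegularSpace X]
    (hP : ∀ P : Ideal C(X, ℂ), P.IsPrime → P.IsMaximal) (n : ℕ) (hn : 0 < n) :
    ∀ A : Matrix (Fin n) (Fin n) C(X, ℂ), ∃ k : ℕ, 0 < k ∧
      ∃ B C : Matrix (Fin n) (Fin n) C(X, ℂ),
        A ^ k = A ^ (k + 1) * B ∧ A ^ k = C * A ^ (k + 1) :=
  fun A => aux_matrix_pi_regular hP A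
end
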